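/- arXiv:cond-mat/0402268 — 5 statements merged into one kernel-verified Lean document; each statement's English description precedes it below -/
import Mathlib

section
/- Let n ≥ 2, y ∈ ℝⁿ with y_j > 0, z ∈ ℝⁿ with z_j ≥ 0 and z_n > 0, and define P(λ) = ∏_{i=1}^n (λ + y_i) − ∑_{j=2}^n [ (∏_{i=1}^{j-1} y_i) · z_j · ∏_{i=j+1}^n (λ + y_i) ]. Then P(λ) equals det(λ·I − M(y,z)), where M(y,z) is the matrix with entries M_{i,j} = -y_j if i=j, y_j if i=j+1, z_j if i=1 and j>1, and 0 otherwise. -/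
open Matrix Finset

/-- The degree-evolution matrix M(y,z). Indices are 0-based: entry (i,j) is
-y_j on the diagonal, y_j on the subdiagonal (i = j+1), z_j in the first row
(i = 0, j > 0), and 0 otherwise. -/
def Myz (n : ℕ) (y z : Fin n → ℝ) : Matrix (Fin n) (Fin n) ℝ :=
  Matrix.of fun i j =>
    if i = j then -y j
    else if (i : ℕ) = (j : ℕ) + 1 then y j
    else if (i : ℕ) = 0 ∧ 0 < (j : ℕ) then z j
    else 0

lemma fin_Ioi_zero (m : ℕ) : Finset.Ioi (0 : Fin (m+1)) = Finset.univ.map (Fin.succEmb m) := by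
  ext i
  simp [Fin.pos_iff_ne_zero, Fin.exists_succ_eq]

lemma fin_Ioi_succ {m : ℕ} (j : Fin m) :
    Finset.Ioi (Fin.succ j) = (Finset.Ioi j).map (Fin.succEmb m) := by
  ext i
  cases i using Fin.cases with
  | zero => simp [Fin.succ_ne_zero]
  | succ k => simp [Fin.succ_lt_succ_iff, Fin.succ_inj]

lemma fin_Iio_succ {m : ℕ} (j : Fin m) :
    Finset.Iio (Fin.succ j) = insert 0 ((Finset.Iio j).map (Fin.succEmb m)) := by
  ext i
  cases i using Fin.cases with
  | zero => simp [Fin.succ_pos]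
  | succ k => simp [Fin.succ_lt_succ_iff, Fin.succ_inj, Fin.succ_ne_zero]

def bidiagW (m : ℕ) (lam : ℝ) (w y : Fin m → ℝ) : Matrix (Fin m) (Fin m) ℝ :=
  Matrix.of fun i j =>
    if (i : ℕ) = 0 then w j
    else if i = j then lam + y j
    else if (i : ℕ) = (j : ℕ) + 1 then -(y j)
    else 0

lemma det_bidiagW (lam : ℝ) : ∀ m (w y : Fin (m+1) → ℝ),
    (bidiagW (m+1) lam w y).det
      = ∑ j, (∏ i ∈ Finset.Iio j, y i) * w j * ∏ i ∈ Finset.Ioi j, (lam + y i) := by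
  intro m
  induction m with
  | zero =>
    intro w y
    rw [Matrix.det_fin_one]
    have h0 : Finset.Iio (0 : Fin 1) = ∅ := by ext i; simp
    simp [bidiagW, h0]
  | succ m ih =>
    intro w y
    rw [Matrix.det_succ_column_zero]
    rw [Fin.sum_univ_succ, Fin.sum_univ_succ]
    have hz : ∀ i : Fin m, (-1 : ℝ) ^ ((i.succ.succ : Fin (m+1+1)) : ℕ) *
        bidiagW (m+1+1) lam w y i.succ.succ 0 *
        ((bidiagW (m+1+1) lam w y).submatrix i.succ.succ.succAbove Fin.succ).det = 0 := by
      intro i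
      have h1 : ((i.succ.succ : Fin (m+1+1)) : ℕ) ≠ 0 := by simp
      have h3 : ((i.succ.succ : Fin (m+1+1)) : ℕ) ≠ (0 : ℕ) + 1 := by
        simp [Fin.val_succ]
      have h2 : i.succ.succ ≠ (0 : Fin (m+1+1)) := Fin.succ_ne_zero _
      simp [bidiagW, h1, h3, h2]
    rw [Finset.sum_eq_zero fun i _ => hz i, add_zero]
    simp only [Fin.succ_zero_eq_one]
    have hA00 : bidiagW (m+1+1) lam w y 0 0 = w 0 := by simp [bidiagW]
    have hA10 : bidiagW (m+1+1) lam w y 1 0 = -(y 0) := by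
      simp [bidiagW]
    have hL : ((bidiagW (m+1+1) lam w y).submatrix Fin.succ Fin.succ).BlockTriangular OrderDual.toDual := by
      intro r c hrc
      have h1 : (r : ℕ) < (c : ℕ) := hrc
      have h2 : r.succ ≠ c.succ := by
        simp only [ne_eq, Fin.succ_inj]
        exact fun h => absurd (congrArg Fin.val h) (Nat.ne_of_lt h1)
      simp only [bidiagW, Matrix.submatrix_apply, Matrix.of_apply, Fin.val_succ, h2, if_false]
      rw [if_neg (by omega), if_neg (by omega)]
    have hdet0 : ((bidiagW (m+1+1) lam w y).submatrix ((0 : Fin (m+1+1)).succAbove) Fin.succ).det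
        = ∏ i ∈ Finset.Ioi (0 : Fin (m+1+1)), (lam + y i) := by
      rw [Fin.succAbove_zero, Matrix.det_of_lowerTriangular _ hL]
      rw [fin_Ioi_zero, Finset.prod_map]
      apply Finset.prod_congr rfl
      intro c _
      simp [bidiagW, Fin.coe_succEmb]
    have hsa : ∀ k : Fin m, (1 : Fin (m+1+1)).succAbove k.succ = k.succ.succ := by
      intro k
      apply Fin.succAbove_of_le_castSucc
      simp [Fin.le_def]
    have hsa0 : (1 : Fin (m+1+1)).succAbove 0 = 0 := by
      apply Fin.succAbove_of_castSucc_lt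
      simp [Fin.lt_def]
    have hsub1 : (bidiagW (m+1+1) lam w y).submatrix ((1 : Fin (m+1+1)).succAbove) Fin.succ
        = bidiagW (m+1) lam (fun j => w j.succ) (fun j => y j.succ) := by
      ext r c
      cases r using Fin.cases with
      | zero =>
        simp [bidiagW, hsa0]
      | succ k =>
        simp only [Matrix.submatrix_apply, hsa, bidiagW, Matrix.of_apply,
          Fin.ext_iff, Fin.val_succ, Fin.val_zero]
        split_ifs <;> first | rfl | omega
    rw [hdet0, hsub1, ih, hA00, hA10]
    conv_rhs => rw [Fin.sum_univ_succ]
    have hIio0 : Finset.Iio (0 : Fin (m+1+1)) = ∅ := by ext i; simp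
    rw [hIio0]
    simp only [Finset.prod_empty, one_mul, Fin.val_zero, pow_zero, Fin.val_one, pow_one,
      Finset.mul_sum]
    congr 1
    apply Finset.sum_congr rfl
    intro j _
    rw [fin_Iio_succ, fin_Ioi_succ, Finset.prod_insert, Finset.prod_map, Finset.prod_map]
    · simp only [Fin.coe_succEmb]
      ring
    · simp [Fin.succ_ne_zero]

/-- Explicit formula for the characteristic polynomial of M(y,z):
det(λI - M(y,z)) = ∏_i (λ + y_i) - ∑_{j>0} (∏_{i<j} y_i) z_j ∏_{i>j} (λ + y_i). -/
theorem charpoly_Myz (n : ℕ) (hn : 2 ≤ n) (y z : Fin n → ℝ)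
    (hy : ∀ j, 0 < y j) (hz : ∀ j, 0 ≤ z j)
    (hzn : ∀ j : Fin n, (j : ℕ) = n - 1 → 0 < z j) (lam : ℝ) :
    (∏ i, (lam + y i)) -
      ∑ j ∈ Finset.univ.filter (fun j : Fin n => 0 < (j : ℕ)),
        (∏ i ∈ Finset.Iio j, y i) * z j * ∏ i ∈ Finset.Ioi j, (lam + y i)
    = Matrix.det (lam • (1 : Matrix (Fin n) (Fin n) ℝ) - Myz n y z) := by
  obtain ⟨m, rfl⟩ : ∃ m, n = m + 1 := ⟨n - 1, by omega⟩
  have hM : lam • (1 : Matrix (Fin (m+1)) (Fin (m+1)) ℝ) - Myz (m+1) y z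
      = bidiagW (m+1) lam (fun j => if (j : ℕ) = 0 then lam + y j else -(z j)) y := by
    ext i j
    simp only [Matrix.sub_apply, Matrix.smul_apply, Matrix.one_apply, smul_eq_mul,
      Myz, bidiagW, Matrix.of_apply]
    by_cases h1 : i = j
    · subst h1
      by_cases h0 : (i : ℕ) = 0 <;> simp [h0]
    · have h1' : ¬ ((i:ℕ) = (j:ℕ)) := fun h => h1 (Fin.ext h)
      by_cases h0 : (i : ℕ) = 0
      · have h2 : ¬ ((i : ℕ) = (j : ℕ) + 1) := by omega
        have h3 : 0 < (j : ℕ) := by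
          rcases Nat.eq_zero_or_pos (j : ℕ) with h | h
          · exact absurd (Fin.ext (by omega)) h1
          · exact h
        have h4 : (j : ℕ) ≠ 0 := by omega
        simp [h1, h0, h2, h3, h4]
      · by_cases h2 : (i : ℕ) = (j : ℕ) + 1 <;> simp [h1, h0, h2]
  rw [hM, det_bidiagW]
  rw [← Finset.sum_filter_add_sum_filter_not Finset.univ (fun j : Fin (m+1) => (j : ℕ) = 0)]
  have hf0 : Finset.univ.filter (fun j : Fin (m+1) => (j : ℕ) = 0) = {0} := by
    ext j; simp [Fin.val_eq_zero_iff]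
  have hfpos : Finset.univ.filter (fun j : Fin (m+1) => ¬ (j : ℕ) = 0)
      = Finset.univ.filter (fun j : Fin (m+1) => 0 < (j : ℕ)) := by
    apply Finset.filter_congr
    intro j _
    simp [Nat.pos_iff_ne_zero]
  have hIio0 : Finset.Iio (0 : Fin (m+1)) = ∅ := by ext i; simp
  rw [hf0, hfpos, Finset.sum_singleton, hIio0]
  have hprod : (lam + y 0) * ∏ i ∈ Finset.Ioi (0 : Fin (m+1)), (lam + y i)
      = ∏ i, (lam + y i) := by
    rw [fin_Ioi_zero, Finset.prod_map, Fin.prod_univ_succ]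
    simp [Fin.coe_succEmb]
  have hsum : ∀ j ∈ Finset.univ.filter (fun j : Fin (m+1) => 0 < (j : ℕ)),
      (∏ i ∈ Finset.Iio j, y i) * (if (j : ℕ) = 0 then lam + y j else -(z j)) *
        ∏ i ∈ Finset.Ioi j, (lam + y i)
      = -((∏ i ∈ Finset.Iio j, y i) * z j * ∏ i ∈ Finset.Ioi j, (lam + y i)) := by
    intro j hj
    simp only [Finset.mem_filter] at hj
    rw [if_neg (by omega)]
    ring
  rw [Finset.sum_congr rfl hsum, Finset.sum_neg_distrib]
  simp only [Finset.prod_empty, one_mul, if_pos (by simp : ((0 : Fin (m+1)) : ℕ) = 0)]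
  rw [hprod]
  ring
end

section
/- Let n ≥ 2, y_j > 0, z_j ≥ 0, z_n > 0, and let w ≥ 0 satisfy P(w, y, z) = 0 where P(λ) = ∏_{i=1}^n (λ + y_i) − ∑_{j=2}^n (∏_{i=1}^{j-1} y_i) z_j ∏_{i=j+1}^n (λ + y_i). Fix k with 2 ≤ k ≤ n−1 and suppose z_k = 0 and w > 0. Then ∂P/∂y_k evaluated at (w, y, z) is strictly negative. -/
open Finset

lemma prod_comp_update_mem {n : ℕ} (f : ℝ → ℝ) (y : Fin n → ℝ) (k : Fin n) (s : ℝ)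
    (t : Finset (Fin n)) (h : k ∈ t) :
    ∏ i ∈ t, f (Function.update y k s i) = f s * ∏ i ∈ t.erase k, f (y i) := by
  have h1 : (fun i => f (Function.update y k s i))
      = Function.update (fun i => f (y i)) k (f s) := by
    funext i; rcases eq_or_ne i k with h | h
    · subst h; simp
    · simp [h]
  rw [h1, Finset.prod_update_of_mem h, Finset.sdiff_singleton_eq_erase]

lemma prod_comp_update_notMem {n : ℕ} (f : ℝ → ℝ) (y : Fin n → ℝ) (k : Fin n) (s : ℝ)
    (t : Finset (Fin n)) (h : k ∉ t) :
    ∏ i ∈ t, f (Function.update y k s i) = ∏ i ∈ t, f (y i) := by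
  refine Finset.prod_congr rfl fun i hi => ?_
  rw [Function.update_of_ne (by rintro rfl; exact h hi)]

/-- The characteristic polynomial P(λ,y,z) of the degree-evolution matrix M(y,z):
P(λ) = ∏_i (λ + y_i) - ∑_{j>0} (∏_{i<j} y_i) z_j ∏_{i>j} (λ + y_i)
(indices 0-based). -/
noncomputable def Pchar (n : ℕ) (lam : ℝ) (y z : Fin n → ℝ) : ℝ :=
  (∏ i, (lam + y i)) -
    ∑ j ∈ Finset.univ.filter (fun j : Fin n => 0 < (j : ℕ)),
      (∏ i ∈ Finset.Iio j, y i) * z j * ∏ i ∈ Finset.Ioi j, (lam + y i)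

/-- If z_k = 0 and w > 0 is a root of P(·,y,z), then ∂P/∂y_k at (w,y,z) is
strictly negative.  (Index k is interior: 1 ≤ k ≤ n-2 in 0-based indexing,
corresponding to 2 ≤ k ≤ n-1 in 1-based indexing.) -/
theorem dP_dyk_neg (n : ℕ) (hn : 2 ≤ n) (y z : Fin n → ℝ)
    (hy : ∀ j, 0 < y j) (hz : ∀ j, 0 ≤ z j)
    (hzn : ∀ j : Fin n, (j : ℕ) = n - 1 → 0 < z j)
    (w : ℝ) (hw0 : 0 ≤ w) (hw : 0 < w)
    (hroot : Pchar n w y z = 0)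
    (k : Fin n) (hk1 : 1 ≤ (k : ℕ)) (hk2 : (k : ℕ) ≤ n - 2)
    (hzk : z k = 0) :
    deriv (fun s : ℝ => Pchar n w (Function.update y k s) z) (y k) < 0 := by
  set T : Finset (Fin n) := Finset.univ.filter (fun j : Fin n => 0 < (j : ℕ)) with hT
  have hkT : k ∈ T := by simp [hT]; omega
  set A : ℝ := ∏ i ∈ Finset.univ.erase k, (w + y i) with hA
  set C : ℝ := ∑ j ∈ (T.erase k).filter (fun j => j < k),
      (∏ i ∈ Finset.Iio j, y i) * z j * ∏ i ∈ (Finset.Ioi j).erase k, (w + y i) with hC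
  set D : ℝ := ∑ j ∈ (T.erase k).filter (fun j => ¬ j < k),
      (∏ i ∈ (Finset.Iio j).erase k, y i) * z j * ∏ i ∈ Finset.Ioi j, (w + y i) with hD
  -- key identity
  have key : ∀ s : ℝ, Pchar n w (Function.update y k s) z
      = (w + s) * A - ((w + s) * C + s * D) := by
    intro s
    unfold Pchar
    have hprod : ∏ i, (w + Function.update y k s i) = (w + s) * A := by
      exact prod_comp_update_mem (fun x => w + x) y k s Finset.univ (Finset.mem_univ k)
    rw [hprod]
    congr 1
    -- split the sum
    rw [← Finset.sum_erase_add T _ hkT]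
    have hkterm : (∏ i ∈ Finset.Iio k, Function.update y k s i) * z k *
        ∏ i ∈ Finset.Ioi k, (w + Function.update y k s i) = 0 := by
      simp [hzk]
    rw [hkterm, add_zero, ← Finset.sum_filter_add_sum_filter_not (T.erase k) (fun j => j < k)]
    congr 1
    · rw [hC, Finset.mul_sum]
      refine Finset.sum_congr rfl fun j hj => ?_
      have hjk : j < k := (Finset.mem_filter.1 hj).2
      have h1 : ∏ i ∈ Finset.Iio j, Function.update y k s i = ∏ i ∈ Finset.Iio j, y i :=
        prod_comp_update_notMem (fun x => x) y k s (Finset.Iio j) (by simp only [Finset.mem_Iio, not_lt]; exact hjk.le)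
      have h2 : ∏ i ∈ Finset.Ioi j, (w + Function.update y k s i)
          = (w + s) * ∏ i ∈ (Finset.Ioi j).erase k, (w + y i) :=
        prod_comp_update_mem (fun x => w + x) y k s _ (by simpa [Finset.mem_Ioi] using hjk)
      rw [h1, h2]; ring
    · rw [hD, Finset.mul_sum]
      refine Finset.sum_congr rfl fun j hj => ?_
      have hj' := Finset.mem_filter.1 hj
      have hjne : j ≠ k := (Finset.mem_erase.1 hj'.1).1
      have hkj : k < j := lt_of_le_of_ne (not_lt.1 hj'.2) hjne.symm
      have h1 : ∏ i ∈ Finset.Iio j, Function.update y k s i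
          = s * ∏ i ∈ (Finset.Iio j).erase k, y i :=
        prod_comp_update_mem id y k s _ (by simpa [Finset.mem_Iio] using hkj)
      have h2 : ∏ i ∈ Finset.Ioi j, (w + Function.update y k s i)
          = ∏ i ∈ Finset.Ioi j, (w + y i) :=
        prod_comp_update_notMem (fun x => w + x) y k s (Finset.Ioi j) (by simp only [Finset.mem_Ioi, not_lt]; exact hkj.le)
      rw [h1, h2]; ring
  -- compute the derivative
  have hfun : (fun s : ℝ => Pchar n w (Function.update y k s) z)
      = fun s => (A - C - D) * s + (w * A - w * C) := by
    funext s; rw [key s]; ring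
  have hderiv : deriv (fun s : ℝ => Pchar n w (Function.update y k s) z) (y k)
      = A - C - D := by
    rw [hfun]
    have : HasDerivAt (fun s : ℝ => (A - C - D) * s + (w * A - w * C)) (A - C - D) (y k) := by
      simpa using ((hasDerivAt_id (y k)).const_mul (A - C - D)).add_const (w * A - w * C)
    exact this.deriv
  rw [hderiv]
  -- D > 0
  have hDpos : 0 < D := by
    rw [hD]
    have hnk : n - 1 < n := by omega
    set j0 : Fin n := ⟨n - 1, hnk⟩ with hj0
    have hj0mem : j0 ∈ (T.erase k).filter (fun j => ¬ j < k) := by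
      simp only [Finset.mem_filter, Finset.mem_erase, hT, Finset.mem_univ, true_and, not_lt]
      refine ⟨⟨?_, by simp [hj0]; omega⟩, ?_⟩
      · intro h; apply absurd (congrArg (Fin.val) h); simp [hj0]; omega
      · rw [Fin.le_def]; simp [hj0]; omega
    refine Finset.sum_pos' (fun j _ => ?_) ⟨j0, hj0mem, ?_⟩
    · apply mul_nonneg (mul_nonneg _ (hz j))
      · exact Finset.prod_nonneg fun i _ => by have := hy i; linarith
      · exact Finset.prod_nonneg fun i _ => by have := hy i; linarith
    · apply mul_pos (mul_pos _ (hzn j0 (by simp [hj0])))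
      · exact Finset.prod_pos fun i _ => by have := hy i; linarith
      · exact Finset.prod_pos fun i _ => by have := hy i; linarith
  -- root identity
  have hrk : (w + y k) * A - ((w + y k) * C + y k * D) = 0 := by
    have := key (y k)
    rw [Function.update_eq_self] at this
    rw [← this]; exact hroot
  have hwyk : 0 < w + y k := by have := hy k; linarith
  have h2 : (w + y k) * (A - C - D) = -(w * D) := by linear_combination hrk
  nlinarith [mul_pos hw hDpos]
end

section
/- Let n ≥ 2, y_j > 0, z_j ≥ 0, z_n > 0, and let w > 0 satisfy P(w, y, z) = 0 where P(λ) = ∏_{i=1}^n (λ + y_i) − ∑_{j=2}^n (∏_{i=1}^{j-1} y_i) z_j ∏_{i=j+1}^n (λ + y_i). Fix k with 2 ≤ k ≤ n−1 and suppose y_k = z_k > 0. Then (∂P/∂y_k + ∂P/∂z_k) evaluated at (w, y, z) is strictly negative. -/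
open Finset

/-- If y_k = z_k > 0 and w > 0 is a root of P(·,y,z), then
∂P/∂y_k + ∂P/∂z_k at (w,y,z) is strictly negative.  (Index k is interior:
1 ≤ k ≤ n-2 in 0-based indexing, i.e. 2 ≤ k ≤ n-1 in 1-based indexing.) -/
theorem dP_dyk_dzk_neg (n : ℕ) (hn : 2 ≤ n) (y z : Fin n → ℝ)
    (hy : ∀ j, 0 < y j) (hz : ∀ j, 0 ≤ z j)
    (hzn : ∀ j : Fin n, (j : ℕ) = n - 1 → 0 < z j)
    (w : ℝ) (hw : 0 < w)
    (hroot : Pchar n w y z = 0)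
    (k : Fin n) (hk1 : 1 ≤ (k : ℕ)) (hk2 : (k : ℕ) ≤ n - 2)
    (hyzk : y k = z k) (hzk : 0 < z k) :
    deriv (fun s : ℝ => Pchar n w (Function.update y k s) z) (y k) +
      deriv (fun s : ℝ => Pchar n w y (Function.update z k s)) (z k) < 0 := by
  classical
  have hwk : 0 < w + y k := add_pos hw (hy k)
  set F := Finset.univ.filter (fun j : Fin n => 0 < (j : ℕ)) with hF
  have hkF : k ∈ F := by
    rw [hF]; simp only [Finset.mem_filter, Finset.mem_univ, true_and]; omega
  set Fl := F.filter (fun j => j < k) with hFldef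
  set Fg := F.filter (fun j => k < j) with hFgdef
  have hkFg : k ∉ Fg := by simp [hFgdef]
  have hsplit : ∀ f : Fin n → ℝ,
      ∑ j ∈ F, f j = ∑ j ∈ Fl, f j + f k + ∑ j ∈ Fg, f j := by
    intro f
    have hset : F.filter (fun j => ¬ j < k) = insert k Fg := by
      ext j
      simp only [Finset.mem_filter, Finset.mem_insert, not_lt, hFgdef]
      constructor
      · rintro ⟨hjF, hkj⟩
        rcases eq_or_lt_of_le hkj with h | h
        · exact Or.inl h.symm
        · exact Or.inr ⟨hjF, h⟩
      · rintro (rfl | ⟨hjF, h⟩)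
        · exact ⟨hkF, le_refl _⟩
        · exact ⟨hjF, h.le⟩
    rw [← Finset.sum_filter_add_sum_filter_not F (fun j => j < k) f, hset,
      Finset.sum_insert hkFg, ← hFldef]
    ring
  set QA := ∏ i ∈ Finset.univ.erase k, (w + y i) with hQAdef
  set Sl := ∑ j ∈ Fl, (∏ i ∈ Finset.Iio j, y i) * z j *
      ∏ i ∈ (Finset.Ioi j).erase k, (w + y i) with hSldef
  set Sg := ∑ j ∈ Fg, (∏ i ∈ (Finset.Iio j).erase k, y i) * z j *
      ∏ i ∈ Finset.Ioi j, (w + y i) with hSgdef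
  set Tk := (∏ i ∈ Finset.Iio k, y i) * z k * ∏ i ∈ Finset.Ioi k, (w + y i) with hTkdef
  -- the y-derivative: the map is affine in s
  have key_y : ∀ s : ℝ, Pchar n w (Function.update y k s) z
      = (QA - (Sl + Sg)) * s + (w * QA - (w * Sl + Tk)) := by
    intro s
    simp only [Pchar, ← hF]
    rw [hsplit]
    have hprod : (∏ i, (w + Function.update y k s i)) = (w + s) * QA := by
      rw [hQAdef, ← Finset.mul_prod_erase Finset.univ
        (fun i => w + Function.update y k s i) (Finset.mem_univ k),
        Function.update_self]
      congr 1
      exact Finset.prod_congr rfl fun i hi => by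
        rw [Function.update_of_ne (Finset.ne_of_mem_erase hi)]
    have hl : ∑ j ∈ Fl, (∏ i ∈ Finset.Iio j, Function.update y k s i) * z j *
        ∏ i ∈ Finset.Ioi j, (w + Function.update y k s i) = (w + s) * Sl := by
      rw [hSldef, Finset.mul_sum]
      refine Finset.sum_congr rfl fun j hj => ?_
      have hjk : j < k := (Finset.mem_filter.mp hj).2
      have h1 : ∏ i ∈ Finset.Iio j, Function.update y k s i = ∏ i ∈ Finset.Iio j, y i :=
        Finset.prod_congr rfl fun i hi =>
          Function.update_of_ne (ne_of_lt (lt_trans (Finset.mem_Iio.mp hi) hjk)) _ _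
      have h2 : ∏ i ∈ Finset.Ioi j, (w + Function.update y k s i)
          = (w + s) * ∏ i ∈ (Finset.Ioi j).erase k, (w + y i) := by
        rw [← Finset.mul_prod_erase (Finset.Ioi j) _ (Finset.mem_Ioi.mpr hjk),
          Function.update_self]
        congr 1
        exact Finset.prod_congr rfl fun i hi => by
          rw [Function.update_of_ne (Finset.ne_of_mem_erase hi)]
      rw [h1, h2]; ring
    have hmid : (∏ i ∈ Finset.Iio k, Function.update y k s i) * z k *
        ∏ i ∈ Finset.Ioi k, (w + Function.update y k s i) = Tk := by
      rw [hTkdef]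
      congr 1
      · congr 1
        exact Finset.prod_congr rfl fun i hi =>
          Function.update_of_ne (ne_of_lt (Finset.mem_Iio.mp hi)) _ _
      · exact Finset.prod_congr rfl fun i hi => by
          rw [Function.update_of_ne (ne_of_gt (Finset.mem_Ioi.mp hi))]
    have hg : ∑ j ∈ Fg, (∏ i ∈ Finset.Iio j, Function.update y k s i) * z j *
        ∏ i ∈ Finset.Ioi j, (w + Function.update y k s i) = s * Sg := by
      rw [hSgdef, Finset.mul_sum]
      refine Finset.sum_congr rfl fun j hj => ?_
      have hkj : k < j := (Finset.mem_filter.mp hj).2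
      have h1 : ∏ i ∈ Finset.Iio j, Function.update y k s i
          = s * ∏ i ∈ (Finset.Iio j).erase k, y i := by
        rw [← Finset.mul_prod_erase (Finset.Iio j) _ (Finset.mem_Iio.mpr hkj),
          Function.update_self]
        congr 1
        exact Finset.prod_congr rfl fun i hi => by
          rw [Function.update_of_ne (Finset.ne_of_mem_erase hi)]
      have h2 : ∏ i ∈ Finset.Ioi j, (w + Function.update y k s i)
          = ∏ i ∈ Finset.Ioi j, (w + y i) :=
        Finset.prod_congr rfl fun i hi => by
          rw [Function.update_of_ne (ne_of_gt (lt_trans hkj (Finset.mem_Ioi.mp hi)))]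
      rw [h1, h2]; ring
    rw [hprod, hl, hmid, hg]; ring
  -- the z-derivative: the map is affine in s
  have key_z : ∀ s : ℝ, Pchar n w y (Function.update z k s)
      = (-((∏ i ∈ Finset.Iio k, y i) * ∏ i ∈ Finset.Ioi k, (w + y i))) * s
        + ((∏ i, (w + y i)) -
          (∑ j ∈ Fl, (∏ i ∈ Finset.Iio j, y i) * z j * ∏ i ∈ Finset.Ioi j, (w + y i)
            + ∑ j ∈ Fg, (∏ i ∈ Finset.Iio j, y i) * z j * ∏ i ∈ Finset.Ioi j, (w + y i))) := by
    intro s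
    simp only [Pchar, ← hF]
    rw [hsplit]
    have hl : ∑ j ∈ Fl, (∏ i ∈ Finset.Iio j, y i) * Function.update z k s j *
        ∏ i ∈ Finset.Ioi j, (w + y i)
        = ∑ j ∈ Fl, (∏ i ∈ Finset.Iio j, y i) * z j * ∏ i ∈ Finset.Ioi j, (w + y i) := by
      refine Finset.sum_congr rfl fun j hj => ?_
      rw [Function.update_of_ne (ne_of_lt (Finset.mem_filter.mp hj).2)]
    have hg : ∑ j ∈ Fg, (∏ i ∈ Finset.Iio j, y i) * Function.update z k s j *
        ∏ i ∈ Finset.Ioi j, (w + y i)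
        = ∑ j ∈ Fg, (∏ i ∈ Finset.Iio j, y i) * z j * ∏ i ∈ Finset.Ioi j, (w + y i) := by
      refine Finset.sum_congr rfl fun j hj => ?_
      rw [Function.update_of_ne (ne_of_gt (Finset.mem_filter.mp hj).2)]
    rw [hl, hg, Function.update_self]
    ring
  have hderiv1 : deriv (fun s : ℝ => Pchar n w (Function.update y k s) z) (y k)
      = QA - (Sl + Sg) := by
    have hfun : (fun s : ℝ => Pchar n w (Function.update y k s) z)
        = fun s => (QA - (Sl + Sg)) * s + (w * QA - (w * Sl + Tk)) := funext key_y
    rw [hfun]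
    simpa using (((hasDerivAt_id (y k)).const_mul (QA - (Sl + Sg))).add_const
      (w * QA - (w * Sl + Tk))).deriv
  have hderiv2 : deriv (fun s : ℝ => Pchar n w y (Function.update z k s)) (z k)
      = -((∏ i ∈ Finset.Iio k, y i) * ∏ i ∈ Finset.Ioi k, (w + y i)) := by
    have hfun : (fun s : ℝ => Pchar n w y (Function.update z k s))
        = fun s => (-((∏ i ∈ Finset.Iio k, y i) * ∏ i ∈ Finset.Ioi k, (w + y i))) * s
          + ((∏ i, (w + y i)) -
            (∑ j ∈ Fl, (∏ i ∈ Finset.Iio j, y i) * z j * ∏ i ∈ Finset.Ioi j, (w + y i)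
              + ∑ j ∈ Fg, (∏ i ∈ Finset.Iio j, y i) * z j * ∏ i ∈ Finset.Ioi j, (w + y i))) :=
      funext key_z
    rw [hfun]
    simpa using (((hasDerivAt_id (z k)).const_mul
      (-((∏ i ∈ Finset.Iio k, y i) * ∏ i ∈ Finset.Ioi k, (w + y i)))).add_const
      ((∏ i, (w + y i)) -
        (∑ j ∈ Fl, (∏ i ∈ Finset.Iio j, y i) * z j * ∏ i ∈ Finset.Ioi j, (w + y i)
          + ∑ j ∈ Fg, (∏ i ∈ Finset.Iio j, y i) * z j * ∏ i ∈ Finset.Ioi j, (w + y i)))).deriv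
  -- rewrite the root equation
  have hA : (∏ i, (w + y i)) = (w + y k) * QA := by
    rw [hQAdef, ← Finset.mul_prod_erase Finset.univ (fun i => w + y i) (Finset.mem_univ k)]
  have hl' : ∑ j ∈ Fl, (∏ i ∈ Finset.Iio j, y i) * z j * ∏ i ∈ Finset.Ioi j, (w + y i)
      = (w + y k) * Sl := by
    rw [hSldef, Finset.mul_sum]
    refine Finset.sum_congr rfl fun j hj => ?_
    have hjk : j < k := (Finset.mem_filter.mp hj).2
    rw [← Finset.mul_prod_erase (Finset.Ioi j) (fun i => w + y i) (Finset.mem_Ioi.mpr hjk)]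
    ring
  have hg' : ∑ j ∈ Fg, (∏ i ∈ Finset.Iio j, y i) * z j * ∏ i ∈ Finset.Ioi j, (w + y i)
      = y k * Sg := by
    rw [hSgdef, Finset.mul_sum]
    refine Finset.sum_congr rfl fun j hj => ?_
    have hkj : k < j := (Finset.mem_filter.mp hj).2
    rw [← Finset.mul_prod_erase (Finset.Iio j) y (Finset.mem_Iio.mpr hkj)]
    ring
  have hroot2 : (w + y k) * QA = (w + y k) * Sl + Tk + y k * Sg := by
    have h0 := hroot
    simp only [Pchar, ← hF] at h0
    rw [hsplit (fun j => (∏ i ∈ Finset.Iio j, y i) * z j * ∏ i ∈ Finset.Ioi j, (w + y i))] at h0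
    rw [hA, hl', hg', ← hTkdef] at h0
    linarith
  have hroot3 : (w + y k) * QA = (w + y k) * Sl
      + (∏ i ∈ Finset.Iio k, y i) * y k * (∏ i ∈ Finset.Ioi k, (w + y i)) + y k * Sg := by
    rw [hroot2, hTkdef, ← hyzk]
  -- positivity facts
  have hBk : 0 < ∏ i ∈ Finset.Iio k, y i := Finset.prod_pos fun i _ => hy i
  have hCk : 0 < ∏ i ∈ Finset.Ioi k, (w + y i) := Finset.prod_pos fun i _ => add_pos hw (hy i)
  have hSg0 : 0 ≤ Sg := by
    rw [hSgdef]
    exact Finset.sum_nonneg fun j hj => mul_nonneg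
      (mul_nonneg (Finset.prod_nonneg fun i _ => (hy i).le) (hz j))
      (Finset.prod_nonneg fun i _ => (add_pos hw (hy i)).le)
  rw [hderiv1, hderiv2]
  have hmul : (w + y k) * (QA - (Sl + Sg)
      + -((∏ i ∈ Finset.Iio k, y i) * ∏ i ∈ Finset.Ioi k, (w + y i)))
      = -(w * Sg) - w * ((∏ i ∈ Finset.Iio k, y i) * ∏ i ∈ Finset.Ioi k, (w + y i)) := by
    linear_combination hroot3
  have hneg : (w + y k) * (QA - (Sl + Sg)
      + -((∏ i ∈ Finset.Iio k, y i) * ∏ i ∈ Finset.Ioi k, (w + y i))) < 0 := by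
    rw [hmul]
    nlinarith [mul_pos hw (mul_pos hBk hCk), mul_nonneg hw.le hSg0]
  nlinarith [hneg, hwk]
end

section
/- In the border toll optimization process, at every time t, the set of children of any node i satisfies: if i has k children, then the min(A−1, k) leftmost children (by position in [0,1]) are infertile at time t and all other children of i are fertile, where A = ⌈1/α⌉. -/
open Finset

/-- Jump cost: number of existing nodes (at the arrival time of node t)
strictly between x_j and x_t. -/
noncomputable def njump (x : ℕ → ℝ) (t j : ℕ) : ℕ :=
  ((Finset.range (t + 1)).filter (fun i => x j < x i ∧ x i < x t)).card

/-- Node i is fertile at time t: a hypothetical new point landing directly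
to the right of x_i would attach to i, i.e. the cost hop(i) of connecting to i
is at most the cost α·#{k ≤ t : x_j < x_k ≤ x_i} + hop(j) of connecting to any
node j ≤ t to the left of i (ties are broken in favor of the nearest node,
which is i). -/
def fertileAt (α : ℝ) (x : ℕ → ℝ) (hop : ℕ → ℕ) (i t : ℕ) : Prop :=
  i ≤ t ∧ ∀ j ≤ t, x j < x i →
    (hop i : ℝ) ≤
      α * (((Finset.range (t + 1)).filter (fun k => x j < x k ∧ x k ≤ x i)).card : ℝ)
        + (hop j : ℝ)

/-- The children of node i present at time t. -/
def childrenAt (parent : ℕ → ℕ) (i t : ℕ) : Finset ℕ :=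
  (Finset.range (t + 1)).filter (fun c => 0 < c ∧ parent c = i)

set_option linter.unusedSectionVars false


section chunk1

noncomputable def Ec (x : ℕ → ℝ) (t : ℕ) (a b : ℝ) : ℕ :=
  ((Finset.range (t + 1)).filter (fun k => a < x k ∧ x k ≤ b)).card

noncomputable def Oc (x : ℕ → ℝ) (t : ℕ) (a b : ℝ) : ℕ :=
  ((Finset.range (t + 1)).filter (fun k => a < x k ∧ x k < b)).card

noncomputable def ml (x : ℕ → ℝ) (parent : ℕ → ℕ) (t v : ℕ) : ℕ :=
  ((Finset.range (t + 1)).filter (fun c => 0 < c ∧ parent c = parent v ∧ x c < x v)).card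

lemma fertile_def (α : ℝ) (x : ℕ → ℝ) (hop : ℕ → ℕ) (i t : ℕ) :
    fertileAt α x hop i t ↔ i ≤ t ∧ ∀ j ≤ t, x j < x i →
      (hop i : ℝ) ≤ α * (Ec x t (x j) (x i) : ℝ) + (hop j : ℝ) := Iff.rfl

lemma Ec_mono (x : ℕ → ℝ) {s t : ℕ} (h : s ≤ t) (a b : ℝ) : Ec x s a b ≤ Ec x t a b :=
  Finset.card_le_card (Finset.filter_subset_filter _ (Finset.range_subset_range.2 (by omega)))

lemma Ec_succ (x : ℕ → ℝ) (s : ℕ) (a b : ℝ) :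
    Ec x (s+1) a b = Ec x s a b + (if a < x (s+1) ∧ x (s+1) ≤ b then 1 else 0) := by
  unfold Ec
  rw [Finset.range_add_one, Finset.filter_insert]
  split_ifs with h
  · rw [Finset.card_insert_of_notMem (by simp)]
  · simp

lemma Ec_split (x : ℕ → ℝ) (t : ℕ) {a b c : ℝ} (hab : a ≤ b) (hbc : b ≤ c) :
    Ec x t a c = Ec x t a b + Ec x t b c := by
  unfold Ec
  rw [← Finset.card_union_of_disjoint]
  · congr 1
    ext k
    simp only [Finset.mem_union, Finset.mem_filter]
    constructor
    · rintro ⟨hk, h1, h2⟩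
      by_cases h : x k ≤ b
      · exact Or.inl ⟨hk, h1, h⟩
      · exact Or.inr ⟨hk, by linarith [not_le.1 h], h2⟩
    · rintro (⟨hk, h1, h2⟩ | ⟨hk, h1, h2⟩)
      · exact ⟨hk, h1, le_trans h2 hbc⟩
      · exact ⟨hk, lt_of_le_of_lt hab h1, h2⟩
  · rw [Finset.disjoint_left]
    rintro k hk1 hk2
    simp only [Finset.mem_filter] at hk1 hk2
    linarith [hk1.2.2, hk2.2.1]

lemma Oc_split (x : ℕ → ℝ) (t : ℕ) {a b c : ℝ} (hab : a ≤ b) (hbc : b < c) :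
    Oc x t a c = Ec x t a b + Oc x t b c := by
  unfold Ec Oc
  rw [← Finset.card_union_of_disjoint]
  · congr 1
    ext k
    simp only [Finset.mem_union, Finset.mem_filter]
    constructor
    · rintro ⟨hk, h1, h2⟩
      by_cases h : x k ≤ b
      · exact Or.inl ⟨hk, h1, h⟩
      · exact Or.inr ⟨hk, not_le.1 h, h2⟩
    · rintro (⟨hk, h1, h2⟩ | ⟨hk, h1, h2⟩)
      · exact ⟨hk, h1, lt_of_le_of_lt h2 hbc⟩
      · exact ⟨hk, lt_of_le_of_lt hab h1, h2⟩
  · rw [Finset.disjoint_left]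
    rintro k hk1 hk2
    simp only [Finset.mem_filter] at hk1 hk2
    linarith [hk1.2.2, hk2.2.1]

lemma njump_succ_eq (x : ℕ → ℝ) (s j : ℕ) :
    njump x (s+1) j = Oc x s (x j) (x (s+1)) := by
  unfold njump Oc
  rw [Finset.range_add_one (n := s+1), Finset.filter_insert, if_neg (by simp)]

lemma ml_mono (x : ℕ → ℝ) (parent : ℕ → ℕ) {s t : ℕ} (h : s ≤ t) (v : ℕ) :
    ml x parent s v ≤ ml x parent t v :=
  Finset.card_le_card (Finset.filter_subset_filter _ (Finset.range_subset_range.2 (by omega)))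

lemma ml_succ (x : ℕ → ℝ) (parent : ℕ → ℕ) (s v : ℕ) :
    ml x parent (s+1) v = ml x parent s v +
      (if 0 < s+1 ∧ parent (s+1) = parent v ∧ x (s+1) < x v then 1 else 0) := by
  unfold ml
  rw [Finset.range_add_one, Finset.filter_insert]
  split_ifs with h
  · rw [Finset.card_insert_of_notMem (by simp)]
  · simp
end chunk1

structure BTOP (α : ℝ) (x : ℕ → ℝ) (parent hop : ℕ → ℕ) : Prop where
  hα : 0 < α
  hx0 : x 0 = 0
  hmem : ∀ i : ℕ, 0 < i → x i ∈ Set.Ioo (0 : ℝ) 1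
  hinj : Function.Injective x
  hhop0 : hop 0 = 0
  hplt : ∀ t : ℕ, 0 < t → parent t < t
  hpx : ∀ t : ℕ, 0 < t → x (parent t) < x t
  hhop : ∀ t : ℕ, 0 < t → hop t = hop (parent t) + 1
  hmin : ∀ t : ℕ, 0 < t → ∀ j < t, x j < x t →
      α * (njump x t (parent t) : ℝ) + (hop (parent t) : ℝ)
        ≤ α * (njump x t j : ℝ) + (hop j : ℝ)
  htie : ∀ t : ℕ, 0 < t → ∀ j < t, x j < x t →
      α * (njump x t j : ℝ) + (hop j : ℝ)
        = α * (njump x t (parent t) : ℝ) + (hop (parent t) : ℝ) →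
      x j ≤ x (parent t)

variable {α : ℝ} {x : ℕ → ℝ} {parent hop : ℕ → ℕ}

namespace BTOP

variable (H : BTOP α x parent hop)
include H

lemma x_nonneg (j : ℕ) : 0 ≤ x j := by
  rcases Nat.eq_zero_or_pos j with h | h
  · simp [h, H.hx0]
  · exact (H.hmem j h).1.le

lemma x_pos {j : ℕ} (h : 0 < j) : 0 < x j := (H.hmem j h).1

lemma fertile_zero (t : ℕ) : fertileAt α x hop 0 t := by
  refine ⟨Nat.zero_le t, fun j hj hxj => ?_⟩
  exact absurd hxj (by rw [H.hx0]; exact not_lt.2 (H.x_nonneg j))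

lemma oneleA : 1 ≤ ⌈1/α⌉₊ :=
  Nat.one_le_iff_ne_zero.2 (by
    have hα := H.hα
    simp only [ne_eq, Nat.ceil_eq_zero, not_le]
    positivity)

lemma alphaA : 1 ≤ α * (⌈1/α⌉₊ : ℝ) := by
  have h1 : (1/α : ℝ) ≤ (⌈1/α⌉₊ : ℝ) := Nat.le_ceil _
  have h2 := mul_le_mul_of_nonneg_left h1 H.hα.le
  have h3 : α * (1/α) = 1 := by
    rw [mul_one_div, div_self H.hα.ne']
  linarith

lemma alpha_small {n : ℕ} (h : n + 1 ≤ ⌈1/α⌉₊) : α * (n : ℝ) < 1 := by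
  have hα := H.hα
  have h2 : (⌈1/α⌉₊ : ℝ) < 1/α + 1 := Nat.ceil_lt_add_one (by positivity)
  have h3 : (n : ℝ) + 1 ≤ (⌈1/α⌉₊ : ℝ) := by exact_mod_cast h
  have h4 : (n : ℝ) < 1/α := by linarith
  have h5 := mul_lt_mul_of_pos_left h4 H.hα
  have h6 : α * (1/α) = 1 := by rw [mul_one_div, div_self H.hα.ne']
  linarith

/-- Node with position strictly between a node j and its... membership count facts -/
lemma node_in_Ec {t v : ℕ} (hv : v ≤ t) {a : ℝ} (ha : a < x v) : 1 ≤ Ec x t a (x v) := by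
  unfold Ec
  rw [Nat.one_le_iff_ne_zero, ne_eq, Finset.card_eq_zero, Finset.filter_eq_empty_iff]
  push_neg
  exact ⟨v, Finset.mem_range_succ_iff.2 hv, ha, le_refl _⟩

/-- The parent of z is fertile at time z-1 (stated for z = s+1). -/
lemma parent_fertile (s : ℕ) : fertileAt α x hop (parent (s+1)) s := by
  have hz0 : 0 < s+1 := Nat.succ_pos s
  have hilt : parent (s+1) < s+1 := H.hplt _ hz0
  have hxi : x (parent (s+1)) < x (s+1) := H.hpx _ hz0
  refine ⟨by omega, fun j hj hxji => ?_⟩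
  have hm := H.hmin (s+1) hz0 j (by omega) (lt_trans hxji hxi)
  rw [njump_succ_eq, njump_succ_eq, Oc_split x s (le_of_lt hxji) hxi] at hm
  have h0 : (0:ℝ) ≤ (Oc x s (x (parent (s+1))) (x (s+1)) : ℝ) := Nat.cast_nonneg _
  have hα := H.hα
  show (hop (parent (s+1)) : ℝ) ≤ α * (Ec x s (x j) (x (parent (s+1))) : ℝ) + hop j
  push_cast at hm ⊢
  nlinarith

end BTOP

/-- The induction invariant. -/
def InvP (α : ℝ) (x : ℕ → ℝ) (parent hop : ℕ → ℕ) (s : ℕ) : Prop :=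
  (∀ v, v ≤ s → 0 < v →
    (fertileAt α x hop v s ↔ ⌈1/α⌉₊ ≤ ml x parent s v + 1)) ∧
  (∀ v, v ≤ s → 0 < v → ml x parent s v + 2 ≤ ⌈1/α⌉₊ →
    ∀ k, k ≤ s → x (parent v) < x k → x k ≤ x v → 0 < k ∧ parent k = parent v)

namespace BTOP
variable (H : BTOP α x parent hop)
include H

/-- region count from invariant part 2 -/
lemma region_count {s v : ℕ} (hInv : InvP α x parent hop s) (hv : v ≤ s) (h0 : 0 < v)
    (hm : ml x parent s v + 2 ≤ ⌈1/α⌉₊) :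
    Ec x s (x (parent v)) (x v) = ml x parent s v + 1 := by
  classical
  have key : (Finset.range (s+1)).filter (fun k => x (parent v) < x k ∧ x k ≤ x v)
      = insert v ((Finset.range (s+1)).filter
        (fun c => 0 < c ∧ parent c = parent v ∧ x c < x v)) := by
    ext k
    simp only [Finset.mem_insert, Finset.mem_filter, Finset.mem_range_succ_iff]
    constructor
    · rintro ⟨hk, h1, h2⟩
      rcases eq_or_lt_of_le h2 with h | h
      · exact Or.inl (H.hinj h)
      · obtain ⟨hk0, hkp⟩ := hInv.2 v hv h0 hm k hk h1 h2
        exact Or.inr ⟨hk, hk0, hkp, h⟩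
    · rintro (h | ⟨hk, hk0, hkp, hkx⟩)
      · subst h
        exact ⟨hv, H.hpx _ h0, le_refl _⟩
      · exact ⟨hk, hkp ▸ H.hpx k hk0, hkx.le⟩
  unfold Ec ml
  rw [key, Finset.card_insert_of_notMem (by simp)]

/-- nearest left neighbour exists -/
lemma nearest_exists (s : ℕ) {z : ℕ} (hz : 0 < z) :
    ∃ u ≤ s, x u < x z ∧ ∀ k ≤ s, x k < x z → x k ≤ x u := by
  classical
  have h0 : (0:ℕ) ∈ (Finset.range (s+1)).filter (fun k => x k < x z) := by
    simp [Finset.mem_range_succ_iff, H.hx0, H.x_pos hz]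
  obtain ⟨u, hu, hmax⟩ := Finset.exists_max_image _ x ⟨0, h0⟩
  simp only [Finset.mem_filter, Finset.mem_range_succ_iff] at hu
  exact ⟨u, hu.1, hu.2, fun k hk hkx => hmax k (by
    simp only [Finset.mem_filter, Finset.mem_range_succ_iff]
    exact ⟨hk, hkx⟩)⟩

end BTOP

namespace BTOP
variable {α : ℝ} {x : ℕ → ℝ} {parent hop : ℕ → ℕ}
variable (H : BTOP α x parent hop)
include H

set_option maxHeartbeats 1000000 in
lemma attach (s : ℕ) (hInv : InvP α x parent hop s)
    (hPers : ∀ v s', s' ≤ s → fertileAt α x hop v s' → fertileAt α x hop v s) :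
    ∃ u ≤ s, x u < x (s+1) ∧ (∀ k ≤ s, x k < x (s+1) → x k ≤ x u) ∧
      (fertileAt α x hop u s → parent (s+1) = u) ∧
      (¬fertileAt α x hop u s → 0 < u ∧ ml x parent s u + 2 ≤ ⌈1/α⌉₊ ∧
          parent (s+1) = parent u ∧ fertileAt α x hop (parent u) s) := by
  have hz0 : 0 < s + 1 := Nat.succ_pos s
  obtain ⟨u, hu, hxu, hnear⟩ := H.nearest_exists s hz0
  have hα := H.hα
  have hq : parent (s+1) < s+1 := H.hplt _ hz0
  have hxq : x (parent (s+1)) < x (s+1) := H.hpx _ hz0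
  have hqu : x (parent (s+1)) ≤ x u := hnear _ (by omega) hxq
  have hOc0 : Oc x s (x u) (x (s+1)) = 0 := by
    unfold Oc
    rw [Finset.card_eq_zero, Finset.filter_eq_empty_iff]
    intro k hk hc
    exact absurd (hnear k (Finset.mem_range_succ_iff.1 hk) hc.2) (not_le.2 hc.1)
  refine ⟨u, hu, hxu, hnear, ?_, ?_⟩
  · -- Case A : u fertile → parent (s+1) = u
    intro hf
    by_contra hne
    have hxqu : x (parent (s+1)) < x u := by
      rcases lt_or_eq_of_le hqu with h | h
      · exact h
      · exact absurd (H.hinj h) hne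
    have hm := H.hmin (s+1) hz0 u (by omega) hxu
    rw [njump_succ_eq, njump_succ_eq, hOc0,
      Oc_split x s (le_of_lt hxqu) hxu, hOc0] at hm
    have hfq : (hop u : ℝ) ≤ α * (Ec x s (x (parent (s+1))) (x u) : ℝ)
        + (hop (parent (s+1)) : ℝ) := hf.2 _ (by omega) hxqu
    have heq := H.htie (s+1) hz0 u (by omega) hxu (by
      rw [njump_succ_eq, njump_succ_eq, hOc0,
        Oc_split x s (le_of_lt hxqu) hxu, hOc0]
      push_cast at hm hfq ⊢
      linarith)
    linarith
  · -- Case B : u infertile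
    intro hnf
    have hu0 : 0 < u := by
      rcases Nat.eq_zero_or_pos u with h | h
      · exact absurd (h ▸ H.fertile_zero s) hnf
      · exact h
    have hm2 : ml x parent s u + 2 ≤ ⌈1/α⌉₊ := by
      have h := (hInv.1 u hu hu0)
      have h2 : ¬ (⌈1/α⌉₊ ≤ ml x parent s u + 1) := fun hc => hnf (h.mpr hc)
      omega
    have hpu : parent u < u := H.hplt u hu0
    have hxpu : x (parent u) < x u := H.hpx u hu0
    have hhopu : hop u = hop (parent u) + 1 := H.hhop u hu0
    have hpfert : fertileAt α x hop (parent u) s := by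
      have h1 := H.parent_fertile (u - 1)
      have h2 : u - 1 + 1 = u := by omega
      rw [h2] at h1
      exact hPers _ (u-1) (by omega) h1
    have hreg : Ec x s (x (parent u)) (x u) = ml x parent s u + 1 :=
      H.region_count hInv hu hu0 hm2
    have hsmall : α * ((ml x parent s u + 1 : ℕ) : ℝ) < 1 :=
      H.alpha_small (by omega)
    have hxpz : x (parent u) < x (s+1) := lt_trans hxpu hxu
    have hOcp : Oc x s (x (parent u)) (x (s+1)) = ml x parent s u + 1 := by
      rw [Oc_split x s (le_of_lt hxpu) hxu, hOc0, hreg]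
    have hmp := H.hmin (s+1) hz0 (parent u) (by omega) hxpz
    rw [njump_succ_eq (j := parent u), hOcp] at hmp
    have hqp : parent (s+1) = parent u := by
      rcases lt_trichotomy (x (parent (s+1))) (x (parent u)) with hlt | heq | hgt
      · -- q strictly left of p : contradiction with p fertile + tie-break
        exfalso
        rw [njump_succ_eq, Oc_split x s (le_of_lt hlt) hxpz, hOcp] at hmp
        have hfq : (hop (parent u) : ℝ) ≤
            α * (Ec x s (x (parent (s+1))) (x (parent u)) : ℝ)
            + (hop (parent (s+1)) : ℝ) := hpfert.2 _ (by omega) hlt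
        have heq2 := H.htie (s+1) hz0 (parent u) (by omega) hxpz (by
          rw [njump_succ_eq, njump_succ_eq, hOcp,
            Oc_split x s (le_of_lt hlt) hxpz, hOcp]
          push_cast at hmp hfq ⊢
          linarith)
        linarith
      · exact H.hinj heq
      · -- q strictly right of p : q is a child of p, cost too big
        exfalso
        have hqleu : x (parent (s+1)) ≤ x u := hqu
        have hq_hop : hop (parent (s+1)) = hop (parent u) + 1 := by
          rcases lt_or_eq_of_le hqleu with h | h
          · have := hInv.2 u hu hu0 hm2 (parent (s+1)) (by omega) hgt h.le
            rw [H.hhop _ this.1, this.2]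
          · rw [H.hinj h, hhopu]
        rw [njump_succ_eq, hq_hop] at hmp
        have h0 : (0:ℝ) ≤ (Oc x s (x (parent (s+1))) (x (s+1)) : ℝ) := Nat.cast_nonneg _
        push_cast at hmp hsmall
        nlinarith
    exact ⟨hu0, hm2, hqp, hpfert⟩

end BTOP

namespace BTOP
variable {α : ℝ} {x : ℕ → ℝ} {parent hop : ℕ → ℕ}
variable (H : BTOP α x parent hop)
include H

lemma pers_step (s : ℕ) (hInv : InvP α x parent hop s)
    (hPers : ∀ v s', s' ≤ s → fertileAt α x hop v s' → fertileAt α x hop v s) :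
    ∀ v, fertileAt α x hop v s → fertileAt α x hop v (s+1) := by
  intro v hf
  have hα := H.hα
  have hvs := hf.1
  refine ⟨by omega, fun j hj hxjv => ?_⟩
  rcases Nat.lt_or_ge j (s+1) with hjs | hjs
  · have h1 : (hop v : ℝ) ≤ α * (Ec x s (x j) (x v) : ℝ) + hop j :=
      hf.2 j (by omega) hxjv
    have h2 : (Ec x s (x j) (x v) : ℝ) ≤ (Ec x (s+1) (x j) (x v) : ℝ) :=
      Nat.cast_le.2 (Ec_mono x (by omega) _ _)
    show (hop v : ℝ) ≤ α * (Ec x (s+1) (x j) (x v) : ℝ) + hop j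
    nlinarith
  · have hj1 : j = s + 1 := by omega
    subst hj1
    obtain ⟨u, hu, hxu, hnear, cA, cB⟩ := H.attach s hInv hPers
    have hxuv : x u < x v := lt_trans hxu hxjv
    have hvu : (hop v : ℝ) ≤ α * (Ec x s (x u) (x v) : ℝ) + hop u :=
      hf.2 u (le_trans hu (by omega)) hxuv
    have hEc : Ec x (s+1) (x (s+1)) (x v) = Ec x s (x u) (x v) := by
      unfold Ec
      congr 1
      ext k
      simp only [Finset.mem_filter, Finset.mem_range_succ_iff]
      constructor
      · rintro ⟨hk, h1, h2⟩
        have hks : k ≤ s := by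
          rcases Nat.lt_or_ge k (s+1) with h | h
          · omega
          · exfalso; have : k = s+1 := by omega
            subst this; exact lt_irrefl _ h1
        exact ⟨hks, lt_trans hxu h1, h2⟩
      · rintro ⟨hk, h1, h2⟩
        refine ⟨by omega, ?_, h2⟩
        rcases lt_trichotomy (x k) (x (s+1)) with h | h | h
        · exact absurd (hnear k hk h) (not_le.2 h1)
        · exfalso; have := H.hinj h; omega
        · exact h
    have hhle : hop u ≤ hop (s+1) := by
      by_cases hfu : fertileAt α x hop u s
      · rw [H.hhop (s+1) (Nat.succ_pos s), cA hfu]; omega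
      · obtain ⟨hu0, _, hqp, _⟩ := cB hfu
        rw [H.hhop (s+1) (Nat.succ_pos s), hqp, ← H.hhop u hu0]
    show (hop v : ℝ) ≤ α * (Ec x (s+1) (x (s+1)) (x v) : ℝ) + hop (s+1)
    rw [hEc]
    have : (hop u : ℝ) ≤ (hop (s+1) : ℝ) := Nat.cast_le.2 hhle
    linarith

end BTOP

namespace BTOP
variable {α : ℝ} {x : ℕ → ℝ} {parent hop : ℕ → ℕ}
variable (H : BTOP α x parent hop)
include H

omit H in
lemma Ec_eq_Oc_top (hinj : Function.Injective x) (s : ℕ) (a : ℝ) :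
    Ec x s a (x (s+1)) = Oc x s a (x (s+1)) := by
  unfold Ec Oc
  congr 1
  apply Finset.filter_congr
  intro k hk
  rw [Finset.mem_range_succ_iff] at hk
  have hne : x k ≠ x (s+1) := fun h => by have := hinj h; omega
  constructor
  · rintro ⟨h1, h2⟩; exact ⟨h1, lt_of_le_of_ne h2 hne⟩
  · rintro ⟨h1, h2⟩; exact ⟨h1, h2.le⟩

set_option maxHeartbeats 1600000 in
/-- invariant step for the newly arrived node v = s+1 -/
lemma step_new (s : ℕ) (hInv : InvP α x parent hop s)
    (hPers : ∀ v s', s' ≤ s → fertileAt α x hop v s' → fertileAt α x hop v s) :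
    (fertileAt α x hop (s+1) (s+1) ↔ ⌈1/α⌉₊ ≤ ml x parent (s+1) (s+1) + 1) ∧
    (ml x parent (s+1) (s+1) + 2 ≤ ⌈1/α⌉₊ →
      ∀ k ≤ s+1, x (parent (s+1)) < x k → x k ≤ x (s+1) →
        0 < k ∧ parent k = parent (s+1)) := by
  have hα := H.hα
  have hz0 : 0 < s + 1 := Nat.succ_pos s
  obtain ⟨u, hu, hxu, hnear, cA, cB⟩ := H.attach s hInv hPers
  have hOc0 : Oc x s (x u) (x (s+1)) = 0 := by
    unfold Oc
    rw [Finset.card_eq_zero, Finset.filter_eq_empty_iff]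
    intro k hk hc
    exact absurd (hnear k (Finset.mem_range_succ_iff.1 hk) hc.2) (not_le.2 hc.1)
  have hEcu0 : Ec x s (x u) (x (s+1)) = 0 := by
    rw [Ec_eq_Oc_top H.hinj, hOc0]
  by_cases hfu : fertileAt α x hop u s
  · -- Case A : z attaches to u
    have hpz : parent (s+1) = u := cA hfu
    have hhopz : hop (s+1) = hop u + 1 := by rw [H.hhop _ hz0, hpz]
    have hmlz : ml x parent (s+1) (s+1) = 0 := by
      unfold ml
      rw [Finset.card_eq_zero, Finset.filter_eq_empty_iff]
      intro k hk hc
      rw [Finset.mem_range_succ_iff] at hk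
      obtain ⟨hk0, hkp, hkx⟩ := hc
      have hks : k ≤ s := by
        rcases Nat.lt_or_ge k (s+1) with h | h
        · omega
        · have hk1 : k = s+1 := by omega
          rw [hk1] at hkx
          exact absurd hkx (lt_irrefl _)
      have h1 : x u < x k := by rw [← hpz, ← hkp]; exact H.hpx k hk0
      exact absurd (hnear k hks hkx) (not_le.2 h1)
    have hEc1 : Ec x (s+1) (x u) (x (s+1)) = 1 := by
      rw [Ec_succ, hEcu0, if_pos ⟨hxu, le_refl _⟩]
    constructor
    · rw [hmlz]
      rcases Nat.lt_or_ge (⌈1/α⌉₊) 2 with hA | hA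
      · -- A = 1 : fertile
        have hA1 : ⌈1/α⌉₊ = 1 := le_antisymm (by omega) H.oneleA
        have hαA := H.alphaA
        rw [hA1] at hαA
        push_cast at hαA
        apply iff_of_true _ (by omega)
        refine ⟨le_refl _, fun j hj hxj => ?_⟩
        rcases lt_trichotomy (x j) (x u) with hlt | heq | hgt
        · have hjs : j ≤ s := by
            rcases Nat.lt_or_ge j (s+1) with h | h
            · omega
            · have hj1 : j = s+1 := by omega
              rw [hj1] at hlt
              linarith
          have hufert := H.pers_step s hInv hPers u hfu
          have h2 : (hop u : ℝ) ≤ α * (Ec x (s+1) (x j) (x u) : ℝ) + hop j :=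
            hufert.2 j (by omega) hlt
          have hsplit : Ec x (s+1) (x j) (x (s+1)) =
              Ec x (s+1) (x j) (x u) + Ec x (s+1) (x u) (x (s+1)) :=
            Ec_split x (s+1) hlt.le hxu.le
          show (hop (s+1) : ℝ) ≤ α * (Ec x (s+1) (x j) (x (s+1)) : ℝ) + hop j
          rw [hsplit, hEc1, hhopz]
          push_cast
          linarith
        · have hju : j = u := H.hinj heq
          show (hop (s+1) : ℝ) ≤ α * (Ec x (s+1) (x j) (x (s+1)) : ℝ) + hop j
          rw [hju, hEc1, hhopz]
          push_cast
          linarith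
        · exfalso
          have hjs : j ≤ s := by
            rcases Nat.lt_or_ge j (s+1) with h | h
            · omega
            · have hj1 : j = s+1 := by omega
              rw [hj1] at hxj
              exact absurd hxj (lt_irrefl _)
          exact absurd (hnear j hjs hxj) (not_le.2 hgt)
      · -- A ≥ 2 : infertile
        apply iff_of_false _ (by omega)
        intro hf
        have h2 : (hop (s+1) : ℝ) ≤ α * (Ec x (s+1) (x u) (x (s+1)) : ℝ) + hop u :=
          hf.2 u (by omega) hxu
        rw [hEc1, hhopz] at h2
        have hsm : α * ((1:ℕ):ℝ) < 1 := H.alpha_small (by omega)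
        push_cast at h2 hsm
        linarith
    · -- part 2
      intro _ k hk h1 h2
      rw [hpz] at h1
      rcases Nat.lt_or_ge k (s+1) with hks | hks
      · exfalso
        have hklt : x k < x (s+1) := by
          rcases lt_or_eq_of_le h2 with h | h
          · exact h
          · exact absurd (H.hinj h) (by omega)
        exact absurd (hnear k (by omega) hklt) (not_le.2 h1)
      · have : k = s+1 := by omega
        subst this
        exact ⟨hz0, rfl⟩
  · -- Case B : z attaches to parent u
    obtain ⟨hu0, hm2u, hpz, hpfert⟩ := cB hfu
    have hxpu : x (parent u) < x u := H.hpx u hu0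
    have hxpz : x (parent u) < x (s+1) := lt_trans hxpu hxu
    have hhopu : hop u = hop (parent u) + 1 := H.hhop u hu0
    have hhopz : hop (s+1) = hop (parent u) + 1 := by rw [H.hhop _ hz0, hpz]
    have hreg : Ec x s (x (parent u)) (x u) = ml x parent s u + 1 :=
      H.region_count hInv hu hu0 hm2u
    -- nodes at time s in (p, z] are those in (p, u]
    have hEcs : Ec x s (x (parent u)) (x (s+1)) = ml x parent s u + 1 := by
      rw [Ec_eq_Oc_top H.hinj, Oc_split x s hxpu.le hxu, hOc0, hreg]
    have hEcz : Ec x (s+1) (x (parent u)) (x (s+1)) = ml x parent s u + 2 := by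
      rw [Ec_succ, hEcs, if_pos ⟨hxpz, le_refl _⟩]
    have hmlz : ml x parent (s+1) (s+1) = ml x parent s u + 1 := by
      unfold ml
      have key : (Finset.range (s+1+1)).filter
          (fun c => 0 < c ∧ parent c = parent (s+1) ∧ x c < x (s+1))
          = insert u ((Finset.range (s+1)).filter
            (fun c => 0 < c ∧ parent c = parent u ∧ x c < x u)) := by
        ext k
        simp only [Finset.mem_insert, Finset.mem_filter, Finset.mem_range_succ_iff]
        constructor
        · rintro ⟨hk, hk0, hkp, hkx⟩
          have hks : k ≤ s := by
            rcases Nat.lt_or_ge k (s+1) with h | h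
            · omega
            · have hk1 : k = s+1 := by omega
              rw [hk1] at hkx
              exact absurd hkx (lt_irrefl _)
          have hku : x k ≤ x u := hnear k hks hkx
          rcases lt_or_eq_of_le hku with h | h
          · exact Or.inr ⟨hks, hk0, by rw [hkp, hpz], h⟩
          · exact Or.inl (H.hinj h)
        · rintro (h | ⟨hk, hk0, hkp, hkx⟩)
          · subst h
            exact ⟨by omega, hu0, hpz.symm ▸ rfl, hxu⟩
          · exact ⟨by omega, hk0, by rw [hkp, hpz], lt_trans hkx hxu⟩
      rw [key, Finset.card_insert_of_notMem (by simp)]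
    constructor
    · rw [hmlz]
      rcases Nat.lt_or_ge (ml x parent s u + 2) (⌈1/α⌉₊) with hA | hA
      · -- still infertile
        apply iff_of_false _ (by omega)
        intro hf
        have h2 : (hop (s+1) : ℝ) ≤
            α * (Ec x (s+1) (x (parent u)) (x (s+1)) : ℝ) + hop (parent u) := by
          rw [← hpz]
          exact hf.2 (parent (s+1)) (by
            have := H.hplt (s+1) hz0; omega) (hpz ▸ hxpz)
        rw [hEcz, hhopz] at h2
        have hsm : α * ((ml x parent s u + 2 : ℕ):ℝ) < 1 := H.alpha_small (by omega)
        push_cast at h2 hsm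
        linarith
      · -- now fertile (A = ml u + 2)
        have hAeq : ⌈1/α⌉₊ = ml x parent s u + 2 := by omega
        have hαA := H.alphaA
        rw [hAeq] at hαA
        apply iff_of_true _ (by omega)
        refine ⟨le_refl _, fun j hj hxj => ?_⟩
        rcases lt_trichotomy (x j) (x (parent u)) with hlt | heq | hgt
        · have hjs : j ≤ s+1 := hj
          have hpfert1 := H.pers_step s hInv hPers (parent u) hpfert
          have h2 : (hop (parent u) : ℝ) ≤
              α * (Ec x (s+1) (x j) (x (parent u)) : ℝ) + hop j :=
            hpfert1.2 j hj hlt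
          have hsplit : Ec x (s+1) (x j) (x (s+1)) =
              Ec x (s+1) (x j) (x (parent u)) + Ec x (s+1) (x (parent u)) (x (s+1)) :=
            Ec_split x (s+1) hlt.le hxpz.le
          show (hop (s+1) : ℝ) ≤ α * (Ec x (s+1) (x j) (x (s+1)) : ℝ) + hop j
          rw [hsplit, hEcz, hhopz]
          push_cast at hαA ⊢
          have : (0:ℝ) < α := hα
          nlinarith
        · have hjp : j = parent u := H.hinj heq
          show (hop (s+1) : ℝ) ≤ α * (Ec x (s+1) (x j) (x (s+1)) : ℝ) + hop j
          rw [hjp, hEcz, hhopz]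
          push_cast at hαA ⊢
          linarith
        · -- j strictly between parent u and z : j is a sibling, same hop
          have hjs : j ≤ s := by
            rcases Nat.lt_or_ge j (s+1) with h | h
            · omega
            · have hj1 : j = s+1 := by omega
              rw [hj1] at hxj
              exact absurd hxj (lt_irrefl _)
          have hju : x j ≤ x u := hnear j hjs hxj
          have hhopj : hop j = hop (parent u) + 1 := by
            rcases lt_or_eq_of_le hju with h | h
            · obtain ⟨hj0, hjp⟩ := hInv.2 u hu hu0 hm2u j hjs hgt h.le
              rw [H.hhop j hj0, hjp]
            · rw [H.hinj h, hhopu]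
          show (hop (s+1) : ℝ) ≤ α * (Ec x (s+1) (x j) (x (s+1)) : ℝ) + hop j
          rw [hhopz, hhopj]
          have : (0:ℝ) ≤ α * (Ec x (s+1) (x j) (x (s+1)) : ℝ) := by positivity
          linarith
    · -- part 2 for z in case B
      intro _ k hk h1 h2
      rw [hpz] at h1 ⊢
      rcases Nat.lt_or_ge k (s+1) with hks | hks
      · have hks' : k ≤ s := by omega
        have hklt : x k < x (s+1) := by
          rcases lt_or_eq_of_le h2 with h | h
          · exact h
          · exact absurd (H.hinj h) (by omega)
        have hku : x k ≤ x u := hnear k hks' hklt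
        rcases lt_or_eq_of_le hku with h | h
        · obtain ⟨hk0, hkp⟩ := hInv.2 u hu hu0 hm2u k hks' h1 h.le
          exact ⟨hk0, hkp⟩
        · have : k = u := H.hinj h
          subst this
          exact ⟨hu0, rfl⟩
      · have : k = s+1 := by omega
        subst this
        exact ⟨hz0, hpz⟩

end BTOP

namespace BTOP
variable {α : ℝ} {x : ℕ → ℝ} {parent hop : ℕ → ℕ}
variable (H : BTOP α x parent hop)
include H

set_option maxHeartbeats 1600000 in
/-- invariant step for old nodes v ≤ s -/
lemma step_old (s : ℕ) (hInv : InvP α x parent hop s)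
    (hPers : ∀ v s', s' ≤ s → fertileAt α x hop v s' → fertileAt α x hop v s) :
    ∀ v, v ≤ s → 0 < v →
      ((fertileAt α x hop v (s+1) ↔ ⌈1/α⌉₊ ≤ ml x parent (s+1) v + 1) ∧
       (ml x parent (s+1) v + 2 ≤ ⌈1/α⌉₊ →
         ∀ k, k ≤ s+1 → x (parent v) < x k → x k ≤ x v →
           0 < k ∧ parent k = parent v)) := by
  intro v hv hv0
  have hα := H.hα
  have hz0 : 0 < s + 1 := Nat.succ_pos s
  have hmlmono : ml x parent s v ≤ ml x parent (s+1) v :=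
    ml_mono x parent (by omega) v
  have hxwv : x (parent v) < x v := H.hpx v hv0
  have hhopv : hop v = hop (parent v) + 1 := H.hhop v hv0
  have hwlt : parent v < v := H.hplt v hv0
  rcases Nat.lt_or_ge (ml x parent s v + 1) (⌈1/α⌉₊) with hA | hA
  · -- v infertile at time s
    have hm2 : ml x parent s v + 2 ≤ ⌈1/α⌉₊ := by omega
    have hwfs : fertileAt α x hop (parent v) s := by
      have h1 := H.parent_fertile (v - 1)
      have h2 : v - 1 + 1 = v := by omega
      rw [h2] at h1
      exact hPers _ (v-1) (by omega) h1
    have hreg : Ec x s (x (parent v)) (x v) = ml x parent s v + 1 :=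
      H.region_count hInv hv hv0 hm2
    by_cases hin : x (parent v) < x (s+1) ∧ x (s+1) ≤ x v
    · -- new node lands in the region of v
      have hxzv : x (s+1) < x v := by
        rcases lt_or_eq_of_le hin.2 with h | h
        · exact h
        · exact absurd (H.hinj h) (by omega)
      obtain ⟨u, hu, hxu, hnear, cA, cB⟩ := H.attach s hInv hPers
      have hwu : x (parent v) ≤ x u := hnear (parent v) (by omega) hin.1
      have hpz : parent (s+1) = parent v := by
        rcases lt_or_eq_of_le hwu with hlt | heqq
        · have hxuv : x u < x v := lt_of_lt_of_le hxu hin.2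
          obtain ⟨hu0, hup⟩ := hInv.2 v hv hv0 hm2 u hu hlt hxuv.le
          have hsub : insert u ((Finset.range (s+1)).filter
              (fun c => 0 < c ∧ parent c = parent u ∧ x c < x u)) ⊆
              (Finset.range (s+1)).filter
              (fun c => 0 < c ∧ parent c = parent v ∧ x c < x v) := by
            intro k hk
            rcases Finset.mem_insert.1 hk with h | h
            · subst h
              exact Finset.mem_filter.2
                ⟨Finset.mem_range_succ_iff.2 hu, hu0, hup, hxuv⟩
            · obtain ⟨hk1, hk0, hkp, hkx⟩ := Finset.mem_filter.1 h
              exact Finset.mem_filter.2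
                ⟨hk1, hk0, by rw [hkp, hup], lt_trans hkx hxuv⟩
          have hcard : ml x parent s u + 1 ≤ ml x parent s v := by
            unfold ml
            have h1 := Finset.card_le_card hsub
            rwa [Finset.card_insert_of_notMem (by simp)] at h1
          have hnfu : ¬ fertileAt α x hop u s := fun hf => by
            have := (hInv.1 u hu hu0).mp hf
            omega
          obtain ⟨_, _, h3, _⟩ := cB hnfu
          rw [h3, hup]
        · have huw : u = parent v := (H.hinj heqq).symm
          rw [cA (by rw [huw]; exact hwfs), huw]
      have hmlz : ml x parent (s+1) v = ml x parent s v + 1 := by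
        rw [ml_succ, if_pos ⟨hz0, hpz, hxzv⟩]
      have hEc1 : Ec x (s+1) (x (parent v)) (x v) = ml x parent s v + 2 := by
        rw [Ec_succ, hreg, if_pos hin]
      constructor
      · rw [hmlz]
        rcases Nat.lt_or_ge (ml x parent s v + 2) (⌈1/α⌉₊) with hA2 | hA2
        · -- still infertile
          apply iff_of_false _ (by omega)
          intro hf
          have h2 : (hop v : ℝ) ≤
              α * (Ec x (s+1) (x (parent v)) (x v) : ℝ) + hop (parent v) :=
            hf.2 (parent v) (by omega) hxwv
          rw [hEc1] at h2
          have hsm : α * ((ml x parent s v + 2 : ℕ):ℝ) < 1 :=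
            H.alpha_small (by omega)
          have hhv : (hop v : ℝ) = (hop (parent v) : ℝ) + 1 := by
            exact_mod_cast congrArg (Nat.cast (R := ℝ)) hhopv
          push_cast at h2 hsm
          linarith
        · -- becomes fertile : A = m + 2
          have hAeq : ⌈1/α⌉₊ = ml x parent s v + 2 := by omega
          have hαA := H.alphaA
          rw [hAeq] at hαA
          apply iff_of_true _ (by omega)
          have hwf1 : fertileAt α x hop (parent v) (s+1) :=
            H.pers_step s hInv hPers _ hwfs
          have hhv : (hop v : ℝ) = (hop (parent v) : ℝ) + 1 := by
            exact_mod_cast congrArg (Nat.cast (R := ℝ)) hhopv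
          refine ⟨by omega, fun j hj hxj => ?_⟩
          rcases lt_trichotomy (x j) (x (parent v)) with hlt | heq | hgt
          · have h2 : (hop (parent v) : ℝ) ≤
                α * (Ec x (s+1) (x j) (x (parent v)) : ℝ) + hop j :=
              hwf1.2 j hj hlt
            have hsplit : Ec x (s+1) (x j) (x v) =
                Ec x (s+1) (x j) (x (parent v)) + Ec x (s+1) (x (parent v)) (x v) :=
              Ec_split x (s+1) hlt.le hxwv.le
            show (hop v : ℝ) ≤ α * (Ec x (s+1) (x j) (x v) : ℝ) + hop j
            rw [hsplit, hEc1]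
            push_cast at hαA ⊢
            linarith
          · have hjw : j = parent v := H.hinj heq
            show (hop v : ℝ) ≤ α * (Ec x (s+1) (x j) (x v) : ℝ) + hop j
            rw [hjw, hEc1]
            push_cast at hαA ⊢
            linarith
          · have hchild : 0 < j ∧ parent j = parent v := by
              rcases Nat.lt_or_ge j (s+1) with h | h
              · exact hInv.2 v hv hv0 hm2 j (by omega) hgt hxj.le
              · have hj1 : j = s+1 := by omega
                rw [hj1]
                exact ⟨hz0, hpz⟩
            have hhj : hop j = hop (parent v) + 1 := by
              rw [H.hhop j hchild.1, hchild.2]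
            show (hop v : ℝ) ≤ α * (Ec x (s+1) (x j) (x v) : ℝ) + hop j
            have hpos : (0:ℝ) ≤ α * (Ec x (s+1) (x j) (x v) : ℝ) := by positivity
            have hhj' : (hop j : ℝ) = (hop (parent v) : ℝ) + 1 := by
              exact_mod_cast congrArg (Nat.cast (R := ℝ)) hhj
            linarith
      · -- part 2, in-region case
        intro hml k hk h1 h2
        rcases Nat.lt_or_ge k (s+1) with hks | hks
        · exact hInv.2 v hv hv0 hm2 k (by omega) h1 h2
        · have hk1 : k = s+1 := by omega
          rw [hk1]
          exact ⟨hz0, hpz⟩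
    · -- new node outside the region of v
      have hml_eq : ml x parent (s+1) v = ml x parent s v := by
        have hnotc : ¬(0 < s+1 ∧ parent (s+1) = parent v ∧ x (s+1) < x v) := by
          rintro ⟨h0, h1, h2⟩
          exact hin ⟨h1 ▸ H.hpx (s+1) hz0, h2.le⟩
        rw [ml_succ, if_neg hnotc]
        omega
      have hEc_eq : Ec x (s+1) (x (parent v)) (x v) = ml x parent s v + 1 := by
        rw [Ec_succ, hreg, if_neg hin]
      constructor
      · rw [hml_eq]
        apply iff_of_false _ (by omega)
        intro hf
        have h2 : (hop v : ℝ) ≤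
            α * (Ec x (s+1) (x (parent v)) (x v) : ℝ) + hop (parent v) :=
          hf.2 (parent v) (by omega) hxwv
        rw [hEc_eq] at h2
        have hsm : α * ((ml x parent s v + 1 : ℕ):ℝ) < 1 :=
          H.alpha_small (by omega)
        have hhv : (hop v : ℝ) = (hop (parent v) : ℝ) + 1 := by
          exact_mod_cast congrArg (Nat.cast (R := ℝ)) hhopv
        push_cast at h2 hsm
        linarith
      · intro hml k hk h1 h2
        rcases Nat.lt_or_ge k (s+1) with hks | hks
        · exact hInv.2 v hv hv0 hm2 k (by omega) h1 h2
        · exfalso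
          have hk1 : k = s+1 := by omega
          rw [hk1] at h1 h2
          exact hin ⟨h1, h2⟩
  · -- v fertile at time s
    have hfs : fertileAt α x hop v s := (hInv.1 v hv hv0).mpr (by omega)
    have hf1 : fertileAt α x hop v (s+1) := H.pers_step s hInv hPers v hfs
    constructor
    · exact iff_of_true hf1 (by omega)
    · intro hml
      exact absurd hml (by omega)

end BTOP

namespace BTOP
variable {α : ℝ} {x : ℕ → ℝ} {parent hop : ℕ → ℕ}
variable (H : BTOP α x parent hop)
include H

lemma inv_step (s : ℕ) (hInv : InvP α x parent hop s)
    (hPers : ∀ v s', s' ≤ s → fertileAt α x hop v s' → fertileAt α x hop v s) :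
    InvP α x parent hop (s+1) := by
  constructor
  · intro v hv hv0
    rcases Nat.lt_or_ge v (s+1) with h | h
    · exact (H.step_old s hInv hPers v (by omega) hv0).1
    · have hveq : v = s+1 := by omega
      subst hveq
      exact (H.step_new s hInv hPers).1
  · intro v hv hv0 hml
    rcases Nat.lt_or_ge v (s+1) with h | h
    · exact (H.step_old s hInv hPers v (by omega) hv0).2 hml
    · have hveq : v = s+1 := by omega
      subst hveq
      exact (H.step_new s hInv hPers).2 hml

lemma inv_all : ∀ s, InvP α x parent hop s ∧
    (∀ v s', s' ≤ s → fertileAt α x hop v s' → fertileAt α x hop v s) := by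
  intro s
  induction s with
  | zero =>
    refine ⟨⟨fun v hv hv0 => absurd hv0 (by omega),
      fun v hv hv0 _ => absurd hv0 (by omega)⟩, ?_⟩
    intro v s' hs' hf
    have : s' = 0 := by omega
    rw [this] at hf
    exact hf
  | succ n ih =>
    obtain ⟨hInv, hPers⟩ := ih
    refine ⟨H.inv_step n hInv hPers, ?_⟩
    intro v s' hs' hf
    rcases Nat.lt_or_ge s' (n+1) with h | h
    · exact H.pers_step n hInv hPers v (hPers v s' (by omega) hf)
    · have : s' = n+1 := by omega
      rw [this] at hf
      exact hf

lemma main (t i : ℕ) (c : ℕ) (hc : c ∈ childrenAt parent i t) :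
    fertileAt α x hop c t ↔
      min (⌈1 / α⌉₊ - 1) (childrenAt parent i t).card ≤
        ((childrenAt parent i t).filter (fun c' => x c' < x c)).card := by
  have hα := H.hα
  obtain ⟨hct, hc0, hpc⟩ : c ≤ t ∧ 0 < c ∧ parent c = i := by
    have := Finset.mem_filter.1 hc
    exact ⟨Finset.mem_range_succ_iff.1 this.1, this.2.1, this.2.2⟩
  have hiff := (H.inv_all t).1.1 c hct hc0
  have hL : ((childrenAt parent i t).filter (fun c' => x c' < x c)).card
      = ml x parent t c := by
    unfold childrenAt ml
    rw [Finset.filter_filter]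
    congr 1
    ext k
    simp only [Finset.mem_filter, Finset.mem_range_succ_iff, hpc]
    tauto
  have hK : ml x parent t c < (childrenAt parent i t).card := by
    rw [← hL]
    apply Finset.card_lt_card
    refine ⟨Finset.filter_subset _ _, fun hsub => ?_⟩
    have := hsub hc
    have := (Finset.mem_filter.1 this).2
    exact absurd this (lt_irrefl _)
  have hA1 : 1 ≤ ⌈1/α⌉₊ := H.oneleA
  rw [hiff, hL]
  rcases Nat.le_total (⌈1/α⌉₊ - 1) (childrenAt parent i t).card with h | h
  · rw [min_eq_left h]
    omega
  · rw [min_eq_right h]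
    omega

end BTOP


/-- In the border toll optimization process with A = ⌈1/α⌉, if a node i has k
children at time t then the min(A-1,k) leftmost of them are infertile at time
t and all the others are fertile: a child c of i is fertile at time t iff at
least min(A-1,k) children of i lie strictly to its left. -/
theorem btop_children_fertility (α : ℝ) (hα : 0 < α) (x : ℕ → ℝ)
    (hx0 : x 0 = 0) (hmem : ∀ i : ℕ, 0 < i → x i ∈ Set.Ioo (0 : ℝ) 1)
    (hinj : Function.Injective x)
    (parent : ℕ → ℕ) (hop : ℕ → ℕ)
    (hhop0 : hop 0 = 0)
    (hstruct : ∀ t : ℕ, 0 < t →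
      parent t < t ∧ x (parent t) < x t ∧ hop t = hop (parent t) + 1)
    (hmin : ∀ t : ℕ, 0 < t → ∀ j < t, x j < x t →
      α * (njump x t (parent t) : ℝ) + (hop (parent t) : ℝ)
        ≤ α * (njump x t j : ℝ) + (hop j : ℝ))
    (htie : ∀ t : ℕ, 0 < t → ∀ j < t, x j < x t →
      α * (njump x t j : ℝ) + (hop j : ℝ)
        = α * (njump x t (parent t) : ℝ) + (hop (parent t) : ℝ) →
      x j ≤ x (parent t)) :
    ∀ t i : ℕ, i ≤ t → ∀ c ∈ childrenAt parent i t,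
      (fertileAt α x hop c t ↔
        min (⌈1 / α⌉₊ - 1) (childrenAt parent i t).card ≤
          ((childrenAt parent i t).filter (fun c' => x c' < x c)).card) := by
  have H : BTOP α x parent hop :=
    ⟨hα, hx0, hmem, hinj, hhop0,
     fun t ht => (hstruct t ht).1, fun t ht => (hstruct t ht).2.1,
     fun t ht => (hstruct t ht).2.2, hmin, htie⟩
  intro t i _hit c hc
  exact H.main t i c hc
end

section
/- In the border toll optimization process with parameter α and A = ⌈1/α⌉, between any two consecutive fertile vertices i and j (with i left of j) at time t, the number of infertile vertices strictly between them is at most A−1, and all of these infertile vertices are children of i; moreover if the hop count satisfies h_j > h_i, then j is a child of i, there are exactly A−1 infertile vertices between i and j, and h_j = h_i + 1. -/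
open Finset
open scoped Classical

noncomputable def cnt (x : ℕ → ℝ) (τ w v : ℕ) : ℕ :=
  ((Finset.range (τ + 1)).filter (fun k => x w < x k ∧ x k ≤ x v)).card

noncomputable def nbw (x : ℕ → ℝ) (τ w v : ℕ) : ℕ :=
  ((Finset.range (τ + 1)).filter (fun k => x w < x k ∧ x k < x v)).card

lemma cnt_mono_time (x : ℕ → ℝ) (τ w v : ℕ) : cnt x τ w v ≤ cnt x (τ+1) w v :=
  card_le_card (filter_subset_filter _ (range_subset_range.mpr (by omega)))

lemma cnt_succ_of_not (x : ℕ → ℝ) (τ w v : ℕ) (h : ¬(x w < x (τ+1) ∧ x (τ+1) ≤ x v)) :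
    cnt x (τ+1) w v = cnt x τ w v := by
  unfold cnt
  rw [range_add_one, filter_insert, if_neg h]

lemma cnt_succ_of (x : ℕ → ℝ) (τ w v : ℕ) (h : x w < x (τ+1) ∧ x (τ+1) ≤ x v) :
    cnt x (τ+1) w v = cnt x τ w v + 1 := by
  unfold cnt
  rw [range_add_one, filter_insert, if_pos h, card_insert_of_notMem (by simp)]

lemma btw_succ_of_not (x : ℕ → ℝ) (τ w v : ℕ) (h : ¬(x w < x (τ+1) ∧ x (τ+1) < x v)) :
    nbw x (τ+1) w v = nbw x τ w v := by
  unfold nbw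
  rw [range_add_one, filter_insert, if_neg h]

lemma btw_succ_of (x : ℕ → ℝ) (τ w v : ℕ) (h : x w < x (τ+1) ∧ x (τ+1) < x v) :
    nbw x (τ+1) w v = nbw x τ w v + 1 := by
  unfold nbw
  rw [range_add_one, filter_insert, if_pos h, card_insert_of_notMem (by simp)]

lemma cnt_split (x : ℕ → ℝ) (τ w m v : ℕ) (h1 : x w < x m) (h2 : x m ≤ x v) :
    cnt x τ w v = cnt x τ w m + cnt x τ m v := by
  unfold cnt
  rw [← card_union_of_disjoint, ← filter_or]
  · apply congrArg
    apply filter_congr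
    intro k _
    constructor
    · rintro ⟨a, b⟩
      rcases le_or_gt (x k) (x m) with h | h
      · exact Or.inl ⟨a, h⟩
      · exact Or.inr ⟨h, b⟩
    · rintro (⟨a, b⟩ | ⟨a, b⟩)
      · exact ⟨a, b.trans h2⟩
      · exact ⟨h1.trans a, b⟩
  · rw [disjoint_left]
    intro k hk hk'
    simp only [mem_filter] at hk hk'
    linarith [hk.2.2, hk'.2.1]

lemma btw_split (x : ℕ → ℝ) (τ w m v : ℕ) (h1 : x w < x m) (h2 : x m < x v) :
    nbw x τ w v = cnt x τ w m + nbw x τ m v := by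
  unfold cnt nbw
  rw [← card_union_of_disjoint, ← filter_or]
  · apply congrArg
    apply filter_congr
    intro k _
    constructor
    · rintro ⟨a, b⟩
      rcases le_or_gt (x k) (x m) with h | h
      · exact Or.inl ⟨a, h⟩
      · exact Or.inr ⟨h, b⟩
    · rintro (⟨a, b⟩ | ⟨a, b⟩)
      · exact ⟨a, lt_of_le_of_lt b h2⟩
      · exact ⟨h1.trans a, b⟩
  · rw [disjoint_left]
    intro k hk hk'
    simp only [mem_filter] at hk hk'
    linarith [hk.2.2, hk'.2.1]

lemma cnt_eq_btw_add_one (x : ℕ → ℝ) (hinj : Function.Injective x) (τ w v : ℕ)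
    (hvτ : v ≤ τ) (hwv : x w < x v) : cnt x τ w v = nbw x τ w v + 1 := by
  have h : ((Finset.range (τ + 1)).filter (fun k => x w < x k ∧ x k ≤ x v))
      = insert v ((Finset.range (τ + 1)).filter (fun k => x w < x k ∧ x k < x v)) := by
    ext k
    simp only [mem_filter, mem_insert, mem_range]
    constructor
    · rintro ⟨hk, a, b⟩
      rcases b.lt_or_eq with h | h
      · exact Or.inr ⟨hk, a, h⟩
      · exact Or.inl (hinj h)
    · rintro (rfl | ⟨hk, a, b⟩)
      · exact ⟨by omega, hwv, le_refl _⟩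
      · exact ⟨hk, a, b.le⟩
  unfold cnt nbw
  rw [h, card_insert_of_notMem (by simp)]

lemma cnt_eq_btw_of_gt (x : ℕ → ℝ) (hinj : Function.Injective x) (τ w v : ℕ) (hv : τ < v) :
    cnt x τ w v = nbw x τ w v := by
  unfold cnt nbw
  apply congrArg
  apply filter_congr
  intro k hk
  simp only [mem_range] at hk
  constructor
  · rintro ⟨a, b⟩
    refine ⟨a, lt_of_le_of_ne b (fun h => ?_)⟩
    have : k = v := hinj h
    omega
  · rintro ⟨a, b⟩
    exact ⟨a, b.le⟩

lemma cnt_mono_right (x : ℕ → ℝ) (τ w v v' : ℕ) (h : x v ≤ x v') :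
    cnt x τ w v ≤ cnt x τ w v' := by
  apply card_le_card
  intro k hk
  simp only [mem_filter] at *
  exact ⟨hk.1, hk.2.1, hk.2.2.trans h⟩

lemma btw_mono_right (x : ℕ → ℝ) (τ w v v' : ℕ) (h : x v ≤ x v') :
    nbw x τ w v ≤ nbw x τ w v' := by
  apply card_le_card
  intro k hk
  simp only [mem_filter] at *
  exact ⟨hk.1, hk.2.1, lt_of_lt_of_le hk.2.2 h⟩

lemma cnt_le_btw (x : ℕ → ℝ) (τ w v v' : ℕ) (h : x v < x v') :
    cnt x τ w v ≤ nbw x τ w v' := by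
  apply card_le_card
  intro k hk
  simp only [mem_filter] at *
  exact ⟨hk.1, hk.2.1, lt_of_le_of_lt hk.2.2 h⟩

lemma btw_le_cnt (x : ℕ → ℝ) (τ w v : ℕ) : nbw x τ w v ≤ cnt x τ w v := by
  apply card_le_card
  intro k hk
  simp only [mem_filter] at *
  exact ⟨hk.1, hk.2.1, hk.2.2.le⟩

lemma A_pos (α : ℝ) (hα : 0 < α) : 1 ≤ ⌈1/α⌉₊ :=
  Nat.one_le_ceil_iff.mpr (by positivity)

lemma one_le_alpha_A (α : ℝ) (hα : 0 < α) : 1 ≤ α * (⌈1/α⌉₊ : ℝ) := by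
  have h := Nat.le_ceil (1/α)
  have h2 := mul_le_mul_of_nonneg_left h hα.le
  rwa [mul_one_div, div_self hα.ne'] at h2

lemma alpha_mul_lt_one (α : ℝ) (hα : 0 < α) (b : ℕ) (hb : b ≤ ⌈1/α⌉₊ - 1) :
    α * (b : ℝ) < 1 := by
  have hA := A_pos α hα
  have hbA : b < ⌈1/α⌉₊ := by omega
  have h2 : (b : ℝ) < 1/α := by
    by_contra h
    push_neg at h
    exact absurd (Nat.ceil_le.mpr h) (by omega)
  have h3 := mul_lt_mul_of_pos_left h2 hα
  rwa [mul_one_div, div_self hα.ne'] at h3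

lemma fert_le {α : ℝ} {x : ℕ → ℝ} {hop : ℕ → ℕ} {v τ w : ℕ}
    (hF : fertileAt α x hop v τ) (hw : w ≤ τ) (hxw : x w < x v) :
    (hop v : ℝ) ≤ α * (cnt x τ w v : ℝ) + hop w := hF.2 w hw hxw

lemma x_nonneg {x : ℕ → ℝ} (hx0 : x 0 = 0)
    (hmem : ∀ i : ℕ, 0 < i → x i ∈ Set.Ioo (0 : ℝ) 1) (v : ℕ) : 0 ≤ x v := by
  rcases Nat.eq_zero_or_pos v with h | h
  · rw [h, hx0]
  · exact (hmem v h).1.le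

lemma fert_zero {α : ℝ} {x : ℕ → ℝ} {hop : ℕ → ℕ} (hx0 : x 0 = 0)
    (hmem : ∀ i : ℕ, 0 < i → x i ∈ Set.Ioo (0 : ℝ) 1) (hhop0 : hop 0 = 0) (τ : ℕ) :
    fertileAt α x hop 0 τ := by
  refine ⟨Nat.zero_le _, fun j hj hxj => absurd hxj (not_lt.mpr ?_)⟩
  rw [hx0]
  exact x_nonneg hx0 hmem j

lemma infert_of {α : ℝ} {x : ℕ → ℝ} {hop : ℕ → ℕ} (hα : 0 < α) {τ v g : ℕ}
    (hg : g ≤ τ) (hx : x g < x v) (hh : hop v = hop g + 1)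
    (hc : cnt x τ g v ≤ ⌈1/α⌉₊ - 1) : ¬ fertileAt α x hop v τ := by
  rintro ⟨-, H⟩
  have h1 : (hop v : ℝ) ≤ α * (cnt x τ g v : ℝ) + hop g := H g hg hx
  have h2 := alpha_mul_lt_one α hα _ hc
  rw [hh] at h1
  push_cast at h1
  linarith

def BGap (α : ℝ) (x : ℕ → ℝ) (parent hop : ℕ → ℕ) (τ v : ℕ) : Prop :=
  ∃ g, g ≤ τ ∧ fertileAt α x hop g τ ∧ x g < x v ∧ parent v = g ∧
    hop v = hop g + 1 ∧
    (∀ k ≤ τ, x g < x k → x k < x v → ¬ fertileAt α x hop k τ) ∧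
    cnt x τ g v ≤ ⌈1/α⌉₊ - 1

def BInv (α : ℝ) (x : ℕ → ℝ) (parent hop : ℕ → ℕ) (τ : ℕ) : Prop :=
  (∀ v ≤ τ, ¬ fertileAt α x hop v τ → BGap α x parent hop τ v) ∧
  (∀ i j : ℕ, fertileAt α x hop i τ → fertileAt α x hop j τ → x i < x j →
    (∀ k ≤ τ, fertileAt α x hop k τ → ¬(x i < x k ∧ x k < x j)) →
    hop j ≤ hop i + 1 ∧
    (hop i < hop j → parent j = i ∧ nbw x τ i j = ⌈1/α⌉₊ - 1))

lemma inv_succ (α : ℝ) (hα : 0 < α) (x : ℕ → ℝ)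
    (hx0 : x 0 = 0) (hmem : ∀ i : ℕ, 0 < i → x i ∈ Set.Ioo (0 : ℝ) 1)
    (hinj : Function.Injective x)
    (parent : ℕ → ℕ) (hop : ℕ → ℕ)
    (hhop0 : hop 0 = 0)
    (hstruct : ∀ t : ℕ, 0 < t →
      parent t < t ∧ x (parent t) < x t ∧ hop t = hop (parent t) + 1)
    (hmin : ∀ t : ℕ, 0 < t → ∀ j < t, x j < x t →
      α * (njump x t (parent t) : ℝ) + (hop (parent t) : ℝ)
        ≤ α * (njump x t j : ℝ) + (hop j : ℝ))
    (htie : ∀ t : ℕ, 0 < t → ∀ j < t, x j < x t →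
      α * (njump x t j : ℝ) + (hop j : ℝ)
        = α * (njump x t (parent t) : ℝ) + (hop (parent t) : ℝ) →
      x j ≤ x (parent t))
    (s : ℕ) (ih : BInv α x parent hop s) : BInv α x parent hop (s+1) := by
  obtain ⟨ih1, ih2⟩ := ih
  have hA1 := A_pos α hα
  have hstr := hstruct (s+1) (by omega)
  -- choose i' : nearest fertile (at time s) to the left of the new point s+1
  have hTne : ((range (s+1)).filter
      (fun k => fertileAt α x hop k s ∧ x k < x (s+1))).Nonempty := by
    refine ⟨0, ?_⟩
    simp only [mem_filter, mem_range]
    refine ⟨by omega, fert_zero hx0 hmem hhop0 s, ?_⟩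
    rw [hx0]; exact (hmem (s+1) (by omega)).1
  obtain ⟨i', hi'mem, hi'max⟩ := Finset.exists_max_image _ x hTne
  simp only [mem_filter, mem_range] at hi'mem
  obtain ⟨hi's', Fi', hxi'u⟩ := hi'mem
  have hi's : i' ≤ s := by omega
  have hmax : ∀ k ≤ s, fertileAt α x hop k s → x k < x (s+1) → x k ≤ x i' := by
    intro k hk Fk hxk
    exact hi'max k (by simp only [mem_filter, mem_range]; exact ⟨by omega, Fk, hxk⟩)
  have hallinf : ∀ k ≤ s, x i' < x k → x k < x (s+1) → ¬ fertileAt α x hop k s := by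
    intro k hk h1 h2 Fk
    exact absurd (hmax k hk Fk h2) (not_le.mpr h1)
  -- identification of the gap ancestor
  have gap_id : ∀ m ≤ s, ¬ fertileAt α x hop m s → ∀ i₀, fertileAt α x hop i₀ s →
      x i₀ < x m → (∀ f ≤ s, fertileAt α x hop f s → x f < x m → x f ≤ x i₀) →
      parent m = i₀ ∧ hop m = hop i₀ + 1 ∧ cnt x s i₀ m ≤ ⌈1/α⌉₊ - 1 := by
    intro m hm hnf i₀ F₀ hx₀ hleft
    obtain ⟨g, hg, Fg, hxgm, hpar, hhopm, hint, hcnt⟩ := ih1 m hm hnf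
    have h1 : x g ≤ x i₀ := hleft g hg Fg hxgm
    have h2 : x i₀ ≤ x g := by
      by_contra h
      push_neg at h
      exact hint i₀ F₀.1 h hx₀ F₀
    have hgi : g = i₀ := hinj (le_antisymm h1 h2)
    subst hgi
    exact ⟨hpar, hhopm, hcnt⟩
  -- the number of points strictly between i' and the new point is at most A-1
  have hbA : nbw x s i' (s+1) ≤ ⌈1/α⌉₊ - 1 := by
    by_cases hne : ((range (s+1)).filter (fun k => x i' < x k ∧ x k < x (s+1))).Nonempty
    · obtain ⟨w, hwmem, hwmax⟩ := Finset.exists_max_image _ x hne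
      simp only [mem_filter, mem_range] at hwmem
      obtain ⟨hw', h1, h2⟩ := hwmem
      have hw : w ≤ s := by omega
      obtain ⟨-, -, hcnt⟩ := gap_id w hw (hallinf w hw h1 h2) i' Fi' h1
        (fun f hf Ff hxf => hmax f hf Ff (hxf.trans h2))
      have he : nbw x s i' (s+1) = cnt x s i' w := by
        unfold nbw cnt
        apply congrArg
        apply filter_congr
        intro k hk
        simp only [mem_range] at hk
        constructor
        · rintro ⟨a, c⟩
          exact ⟨a, hwmax k (by simp only [mem_filter, mem_range]; exact ⟨hk, a, c⟩)⟩
        · rintro ⟨a, c⟩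
          exact ⟨a, lt_of_le_of_lt c h2⟩
      omega
    · have he : nbw x s i' (s+1) = 0 := by
        unfold nbw
        rw [not_nonempty_iff_eq_empty.mp hne, card_empty]
      omega
  -- old gap members stay infertile at time s+1
  have hkeep : ∀ k ≤ s, x i' < x k → x k < x (s+1) → ¬ fertileAt α x hop k (s+1) := by
    intro k hk h1 h2
    obtain ⟨-, hhopk, hcnt⟩ := gap_id k hk (hallinf k hk h1 h2) i' Fi' h1
      (fun f hf Ff hxf => hmax f hf Ff (hxf.trans h2))
    refine infert_of hα (by omega : i' ≤ s+1) h1 hhopk ?_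
    rw [cnt_succ_of_not x s i' k (fun hcon => absurd hcon.2 (not_le.mpr h2))]
    exact hcnt
  -- njump at arrival in terms of nbw at time s
  have hnj : ∀ w : ℕ, njump x (s+1) w = nbw x s w (s+1) := by
    intro w
    have h0 : njump x (s+1) w = nbw x (s+1) w (s+1) := rfl
    rw [h0, btw_succ_of_not x s w (s+1) (fun hcon => lt_irrefl _ hcon.2)]
  -- the new point attaches to i'
  have hparu : parent (s+1) = i' := by
    obtain ⟨hplt, hxp, hhopu⟩ := hstr
    have claim1 : ∀ w ≤ s, x w < x i' →
        α * (nbw x s i' (s+1) : ℝ) + hop i' ≤ α * (nbw x s w (s+1) : ℝ) + hop w := by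
      intro w hw hxw
      have hsp : nbw x s w (s+1) = cnt x s w i' + nbw x s i' (s+1) :=
        btw_split x s w i' (s+1) hxw hxi'u
      have hf : (hop i' : ℝ) ≤ α * (cnt x s w i' : ℝ) + hop w := fert_le Fi' hw hxw
      rw [hsp]
      push_cast
      linarith
    have claim2 : ∀ w ≤ s, x i' < x w → x w < x (s+1) →
        α * (nbw x s i' (s+1) : ℝ) + hop i' < α * (nbw x s w (s+1) : ℝ) + hop w := by
      intro w hw h1 h2
      obtain ⟨-, hhopw, -⟩ := gap_id w hw (hallinf w hw h1 h2) i' Fi' h1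
        (fun f hf Ff hxf => hmax f hf Ff (hxf.trans h2))
      have hb1 : α * (nbw x s i' (s+1) : ℝ) < 1 := alpha_mul_lt_one α hα _ hbA
      have hb2 : (0:ℝ) ≤ α * (nbw x s w (s+1) : ℝ) := by positivity
      rw [hhopw]
      push_cast
      linarith
    rcases lt_trichotomy (x (parent (s+1))) (x i') with hlt | heq | hgt
    · exfalso
      have h1 := hmin (s+1) (by omega) i' (by omega) hxi'u
      rw [hnj i', hnj (parent (s+1))] at h1
      have h2 := claim1 (parent (s+1)) (by omega) hlt
      have heq2 : α * (njump x (s+1) i' : ℝ) + hop i'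
          = α * (njump x (s+1) (parent (s+1)) : ℝ) + hop (parent (s+1)) := by
        rw [hnj i', hnj (parent (s+1))]
        linarith
      have h3 := htie (s+1) (by omega) i' (by omega) hxi'u heq2
      linarith
    · exact hinj heq
    · exfalso
      have h1 := hmin (s+1) (by omega) i' (by omega) hxi'u
      rw [hnj i', hnj (parent (s+1))] at h1
      have h2 := claim2 (parent (s+1)) (by omega) hgt hxp
      linarith
  have hopu : hop (s+1) = hop i' + 1 := by rw [hstr.2.2, hparu]
  -- fertile points stay fertile
  have hpers : ∀ v, fertileAt α x hop v s → fertileAt α x hop v (s+1) := by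
    intro v Fv
    have hv := Fv.1
    refine ⟨by omega, ?_⟩
    intro w hw hxwv
    show (hop v : ℝ) ≤ α * (cnt x (s+1) w v : ℝ) + hop w
    by_cases hw' : w ≤ s
    · have h1 := fert_le Fv hw' hxwv
      have h2 : (cnt x s w v : ℝ) ≤ (cnt x (s+1) w v : ℝ) := by
        exact_mod_cast cnt_mono_time x s w v
      nlinarith
    · have hw2 : w = s+1 := by omega
      subst hw2
      have h1 := fert_le Fv hi's (hxi'u.trans hxwv)
      have hs1 : cnt x s i' v = cnt x s i' (s+1) + cnt x s (s+1) v :=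
        cnt_split x s i' (s+1) v hxi'u hxwv.le
      have hs2 : cnt x s i' (s+1) = nbw x s i' (s+1) :=
        cnt_eq_btw_of_gt x hinj s i' (s+1) (by omega)
      have hs3 : cnt x (s+1) (s+1) v = cnt x s (s+1) v :=
        cnt_succ_of_not x s (s+1) v (fun hcon => lt_irrefl _ hcon.1)
      have hb1 : α * (nbw x s i' (s+1) : ℝ) < 1 := alpha_mul_lt_one α hα _ hbA
      rw [hs1, hs2] at h1
      rw [hs3, hopu]
      push_cast at h1 ⊢
      linarith
  -- criterion for new fertile vertices
  have hnewfert : ∀ v ≤ s+1, x i' < x v → hop v = hop i' + 1 →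
      ⌈1/α⌉₊ ≤ cnt x (s+1) i' v →
      (∀ w ≤ s, x i' < x w → x w < x v → hop i' + 1 ≤ hop w) →
      fertileAt α x hop v (s+1) := by
    intro v hv hxv hhv hcv hwmin
    refine ⟨hv, ?_⟩
    intro w hw hxwv
    show (hop v : ℝ) ≤ α * (cnt x (s+1) w v : ℝ) + hop w
    have hαA := one_le_alpha_A α hα
    have hcv' : (⌈1/α⌉₊ : ℝ) ≤ (cnt x (s+1) i' v : ℝ) := by exact_mod_cast hcv
    have h1A : (1:ℝ) ≤ α * (cnt x (s+1) i' v : ℝ) := by nlinarith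
    rcases lt_trichotomy (x w) (x i') with hlt | heq | hgt
    · have hw' : w ≤ s := by
        by_contra h
        have hws : w = s+1 := by omega
        subst hws
        exact absurd hlt (not_lt.mpr hxi'u.le)
      have hsp : cnt x (s+1) w v = cnt x (s+1) w i' + cnt x (s+1) i' v :=
        cnt_split x (s+1) w i' v hlt hxv.le
      have hsi : cnt x (s+1) w i' = cnt x s w i' :=
        cnt_succ_of_not x s w i' (fun hcon => absurd hcon.2 (not_le.mpr hxi'u))
      have hf := fert_le Fi' hw' hlt
      rw [hsp, hsi, hhv]
      push_cast
      linarith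
    · have hwi : w = i' := hinj heq
      subst hwi
      rw [hhv]
      push_cast
      linarith
    · by_cases hw' : w ≤ s
      · have hmw := hwmin w hw' hgt hxwv
        have hmw' : (hop i' : ℝ) + 1 ≤ (hop w : ℝ) := by exact_mod_cast hmw
        have hb2 : (0:ℝ) ≤ α * (cnt x (s+1) w v : ℝ) := by positivity
        rw [hhv]
        push_cast
        linarith
      · have hw2 : w = s+1 := by omega
        subst hw2
        have hb2 : (0:ℝ) ≤ α * (cnt x (s+1) (s+1) v : ℝ) := by positivity
        rw [hhv, hopu]
        push_cast
        linarith
  -- status dichotomy for old infertile points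
  have hstat : ∀ v ≤ s, ¬ fertileAt α x hop v s →
      (BGap α x parent hop (s+1) v ∧ ¬ fertileAt α x hop v (s+1)) ∨
      (fertileAt α x hop v (s+1) ∧ x i' < x v ∧ hop v = hop i' + 1 ∧ parent v = i' ∧
        nbw x (s+1) i' v = ⌈1/α⌉₊ - 1 ∧
        (∀ k ≤ s+1, x i' < x k → x k < x v → ¬ fertileAt α x hop k (s+1)) ∧
        (∀ f ≤ s, fertileAt α x hop f s → x f < x v → x f ≤ x i')) := by
    intro v hv hnfv
    obtain ⟨g, hg, Fg, hxgv, hparv, hhopv, hint, hgcnt⟩ := ih1 v hv hnfv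
    have hgnf : ∀ f ≤ s, fertileAt α x hop f s → x f < x v → x f ≤ x g := by
      intro f hf Ff hxf
      by_contra h
      push_neg at h
      exact hint f hf h hxf Ff
    by_cases hC : x g < x (s+1) ∧ x (s+1) < x v
    · have hgi : g = i' := by
        have h1 : x g ≤ x i' := hmax g hg Fg hC.1
        have h2 : x i' ≤ x g := by
          by_contra h
          push_neg at h
          exact hint i' hi's h (hxi'u.trans hC.2) Fi'
        exact hinj (le_antisymm h1 h2)
      subst hgi
      have hq1 : cnt x (s+1) g v = cnt x s g v + 1 := cnt_succ_of x s g v ⟨hC.1, hC.2.le⟩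
      have hq2 : cnt x s g v = nbw x s g v + 1 := cnt_eq_btw_add_one x hinj s g v hv hxgv
      have hbq : nbw x s g (s+1) + 1 ≤ cnt x s g v := by
        have h1 : nbw x s g (s+1) ≤ nbw x s g v := btw_mono_right x s g (s+1) v hC.2.le
        omega
      have humemc : cnt x (s+1) g (s+1) = nbw x s g (s+1) + 1 := by
        have e1 : cnt x (s+1) g (s+1) = nbw x (s+1) g (s+1) + 1 :=
          cnt_eq_btw_add_one x hinj (s+1) g (s+1) (le_refl _) hC.1
        have e2 : nbw x (s+1) g (s+1) = nbw x s g (s+1) :=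
          btw_succ_of_not x s g (s+1) (fun hcon => lt_irrefl _ hcon.2)
        omega
      have hmemb : ∀ k ≤ s, x g < x k → x k < x v →
          hop k = hop g + 1 ∧ cnt x (s+1) g k ≤ cnt x s g v := by
        intro k hk h1 h2
        have hnfk : ¬ fertileAt α x hop k s := hint k hk h1 h2
        obtain ⟨-, hhopk, -⟩ := gap_id k hk hnfk g Fg h1
          (fun f hf Ff hxf => hgnf f hf Ff (hxf.trans h2))
        refine ⟨hhopk, ?_⟩
        have hck : cnt x s g k ≤ nbw x s g v := cnt_le_btw x s g k v h2
        by_cases hu : x g < x (s+1) ∧ x (s+1) ≤ x k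
        · rw [cnt_succ_of x s g k hu]; omega
        · rw [cnt_succ_of_not x s g k hu]; omega
      by_cases hqA : cnt x s g v + 1 ≤ ⌈1/α⌉₊ - 1
      · left
        have hnf1 : ¬ fertileAt α x hop v (s+1) :=
          infert_of hα (by omega : g ≤ s+1) hxgv hhopv (by omega)
        refine ⟨⟨g, by omega, hpers g Fg, hxgv, hparv, hhopv, ?_, by omega⟩, hnf1⟩
        intro k hk h1 h2
        by_cases hku : k = s+1
        · subst hku
          exact infert_of hα (by omega : g ≤ s+1) h1 (by rw [hopu]) (by omega)
        · have hk' : k ≤ s := by omega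
          obtain ⟨hhopk, hck⟩ := hmemb k hk' h1 h2
          exact infert_of hα (by omega : g ≤ s+1) h1 hhopk (by omega)
      · right
        have hqe : ⌈1/α⌉₊ ≤ cnt x s g v + 1 := by omega
        have Fv' : fertileAt α x hop v (s+1) := by
          apply hnewfert v (by omega) hxgv hhopv (by omega)
          intro w hw h1 h2
          obtain ⟨hhopw, -⟩ := hmemb w hw h1 h2
          omega
        refine ⟨Fv', hxgv, hhopv, hparv, ?_, ?_, hgnf⟩
        · have e1 : nbw x (s+1) g v = nbw x s g v + 1 := btw_succ_of x s g v hC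
          omega
        · intro k hk h1 h2
          by_cases hku : k = s+1
          · subst hku
            exact infert_of hα (by omega : g ≤ s+1) h1 (by rw [hopu]) (by omega)
          · have hk' : k ≤ s := by omega
            obtain ⟨hhopk, hck⟩ := hmemb k hk' h1 h2
            exact infert_of hα (by omega : g ≤ s+1) h1 hhopk (by omega)
    · left
      have hcnt2 : cnt x (s+1) g v = cnt x s g v := by
        apply cnt_succ_of_not
        rintro ⟨h1, h2⟩
        apply hC
        refine ⟨h1, lt_of_le_of_ne h2 (fun he => ?_)⟩
        have : (s+1) = v := hinj he
        omega
      refine ⟨⟨g, by omega, hpers g Fg, hxgv, hparv, hhopv, ?_,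
        by omega⟩, infert_of hα (by omega : g ≤ s+1) hxgv hhopv (by omega)⟩
      intro k hk h1 h2
      by_cases hku : k = s+1
      · subst hku
        exact absurd ⟨h1, h2⟩ hC
      · have hk' : k ≤ s := by omega
        have hnfk := hint k hk' h1 h2
        obtain ⟨-, hhopk, hkc⟩ := gap_id k hk' hnfk g Fg h1
          (fun f hf Ff hxf => hgnf f hf Ff (hxf.trans h2))
        refine infert_of hα (by omega : g ≤ s+1) h1 hhopk ?_
        have he : cnt x (s+1) g k = cnt x s g k := by
          apply cnt_succ_of_not
          rintro ⟨ha, hb⟩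
          exact hC ⟨ha, lt_of_le_of_lt hb h2⟩
        omega
  -- status of the new point
  have hub : cnt x (s+1) i' (s+1) = nbw x s i' (s+1) + 1 := by
    have e1 : cnt x (s+1) i' (s+1) = nbw x (s+1) i' (s+1) + 1 :=
      cnt_eq_btw_add_one x hinj (s+1) i' (s+1) (le_refl _) hxi'u
    have e2 : nbw x (s+1) i' (s+1) = nbw x s i' (s+1) :=
      btw_succ_of_not x s i' (s+1) (fun hcon => lt_irrefl _ hcon.2)
    omega
  have hnbu : nbw x (s+1) i' (s+1) = nbw x s i' (s+1) :=
    btw_succ_of_not x s i' (s+1) (fun hcon => lt_irrefl _ hcon.2)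
  have hufert : ⌈1/α⌉₊ ≤ nbw x s i' (s+1) + 1 → fertileAt α x hop (s+1) (s+1) := by
    intro hge
    apply hnewfert (s+1) (le_refl _) hxi'u hopu (by omega)
    intro w hw h1 h2
    obtain ⟨-, hhopw, -⟩ := gap_id w hw (hallinf w hw h1 h2) i' Fi' h1
      (fun f hf Ff hxf => hmax f hf Ff (hxf.trans h2))
    omega
  have huinf : ¬ ⌈1/α⌉₊ ≤ nbw x s i' (s+1) + 1 →
      ¬ fertileAt α x hop (s+1) (s+1) ∧ BGap α x parent hop (s+1) (s+1) := by
    intro hlt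
    have hni : ¬ fertileAt α x hop (s+1) (s+1) :=
      infert_of hα (by omega : i' ≤ s+1) hxi'u hopu (by omega)
    refine ⟨hni, ⟨i', by omega, hpers i' Fi', hxi'u, hparu, hopu, ?_, by omega⟩⟩
    intro k hk h1 h2
    have hk' : k ≤ s := by
      by_contra hh
      have : k = s+1 := by omega
      subst this
      exact lt_irrefl _ h2
    exact hkeep k hk' h1 h2
  -- properties of a newly fertile vertex
  have hNF : ∀ k, fertileAt α x hop k (s+1) →
      (k = s+1 ∨ ¬ fertileAt α x hop k s) →
      x i' < x k ∧ hop k = hop i' + 1 ∧ parent k = i' ∧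
      nbw x (s+1) i' k = ⌈1/α⌉₊ - 1 ∧
      (∀ m ≤ s+1, x i' < x m → x m < x k → ¬ fertileAt α x hop m (s+1)) ∧
      (∀ f ≤ s, fertileAt α x hop f s → x f < x k → x f ≤ x i') := by
    intro k Fk hnew
    by_cases hks : k = s+1
    · subst hks
      have hge : ⌈1/α⌉₊ ≤ nbw x s i' (s+1) + 1 := by
        by_contra h
        exact (huinf h).1 Fk
      have hbeq : nbw x s i' (s+1) = ⌈1/α⌉₊ - 1 := by omega
      refine ⟨hxi'u, hopu, hparu, by omega, ?_, fun f hf Ff hxf => hmax f hf Ff hxf⟩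
      intro m hm h1 h2
      have hm' : m ≤ s := by
        by_contra hh
        have : m = s+1 := by omega
        subst this
        exact lt_irrefl _ h2
      exact hkeep m hm' h1 h2
    · have hk2 : k ≤ s := by have := Fk.1; omega
      have hold : ¬ fertileAt α x hop k s := by
        rcases hnew with h | h
        · exact absurd h hks
        · exact h
      rcases hstat k hk2 hold with ⟨-, hni⟩ | ⟨-, h1, h2, h3, h4, h5, h6⟩
      · exact absurd Fk hni
      · exact ⟨h1, h2, h3, h4, h5, h6⟩
  constructor
  · -- part 1
    intro v hv hnfv
    by_cases hvs : v = s+1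
    · subst hvs
      by_cases hge : ⌈1/α⌉₊ ≤ nbw x s i' (s+1) + 1
      · exact absurd (hufert hge) hnfv
      · exact (huinf hge).2
    · have hv' : v ≤ s := by omega
      have hnfs : ¬ fertileAt α x hop v s := fun h => hnfv (hpers v h)
      rcases hstat v hv' hnfs with ⟨hg, -⟩ | ⟨hf, -⟩
      · exact hg
      · exact absurd hf hnfv
  · -- part 2
    intro i₁ j₁ F₁ F₂ hx12 hcons
    by_cases hjnew : j₁ = s+1 ∨ ¬ fertileAt α x hop j₁ s
    · obtain ⟨hP1, hP2, hP3, hP4, hP5, hP6⟩ := hNF j₁ F₂ hjnew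
      have hii : i₁ = i' := by
        have ha : x i' ≤ x i₁ := by
          by_contra h
          push_neg at h
          exact absurd ⟨h, hP1⟩ (hcons i' (by omega) (hpers i' Fi'))
        have hb' : x i₁ ≤ x i' := by
          by_contra h
          push_neg at h
          exact hP5 i₁ F₁.1 h hx12 F₁
        exact hinj (le_antisymm hb' ha)
      subst hii
      exact ⟨by omega, fun _ => ⟨hP3, hP4⟩⟩
    · push_neg at hjnew
      obtain ⟨hjne, Fj₁s⟩ := hjnew
      by_cases hinew : i₁ = s+1 ∨ ¬ fertileAt α x hop i₁ s
      · obtain ⟨hQ1, hQ2, hQ3, hQ4, hQ5, hQ6⟩ := hNF i₁ F₁ hinew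
        have hcons' : ∀ k ≤ s, fertileAt α x hop k s → ¬(x i' < x k ∧ x k < x j₁) := by
          rintro k hk Fk ⟨h1, h2⟩
          rcases lt_trichotomy (x k) (x i₁) with hlt | heq | hgt
          · exact absurd (hQ6 k hk Fk hlt) (not_le.mpr h1)
          · have hki : k = i₁ := hinj heq
            subst hki
            rcases hinew with h | h
            · omega
            · exact h Fk
          · exact absurd ⟨hgt, h2⟩ (hcons k (by omega) (hpers k Fk))
        obtain ⟨hres1, -⟩ := ih2 i' j₁ Fi' Fj₁s (hQ1.trans hx12) hcons'
        constructor
        · omega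
        · intro hlt
          exact absurd hlt (by omega)
      · push_neg at hinew
        obtain ⟨hine, Fi₁s⟩ := hinew
        have hi1s : i₁ ≤ s := by have := F₁.1; omega
        have hj1s : j₁ ≤ s := by have := F₂.1; omega
        have hconss : ∀ k ≤ s, fertileAt α x hop k s → ¬(x i₁ < x k ∧ x k < x j₁) :=
          fun k hk Fk => hcons k (by omega) (hpers k Fk)
        obtain ⟨hle, heqc⟩ := ih2 i₁ j₁ Fi₁s Fj₁s hx12 hconss
        refine ⟨hle, ?_⟩
        intro hlt
        obtain ⟨hpj, hbtw⟩ := heqc hlt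
        refine ⟨hpj, ?_⟩
        by_cases hub2 : x i₁ < x (s+1) ∧ x (s+1) < x j₁
        · exfalso
          have hii' : i₁ = i' := by
            have ha : x i₁ ≤ x i' := hmax i₁ hi1s Fi₁s hub2.1
            have hb' : x i' ≤ x i₁ := by
              by_contra h
              push_neg at h
              exact absurd ⟨h, hxi'u.trans hub2.2⟩ (hcons i' (by omega) (hpers i' Fi'))
            exact hinj (le_antisymm ha hb')
          subst hii'
          have hsp : nbw x s i₁ j₁ = cnt x s i₁ (s+1) + nbw x s (s+1) j₁ :=
            btw_split x s i₁ (s+1) j₁ hub2.1 hub2.2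
          have hcb : cnt x s i₁ (s+1) = nbw x s i₁ (s+1) :=
            cnt_eq_btw_of_gt x hinj s i₁ (s+1) (by omega)
          by_cases hr : ((range (s+1)).filter
              (fun k => x (s+1) < x k ∧ x k < x j₁)).Nonempty
          · obtain ⟨w, hwmem, hwmax⟩ := Finset.exists_max_image _ x hr
            simp only [mem_filter, mem_range] at hwmem
            obtain ⟨hwr, hw1, hw2⟩ := hwmem
            have hws : w ≤ s := by omega
            have hxi'w : x i₁ < x w := hub2.1.trans hw1
            have hnfw : ¬ fertileAt α x hop w s := by
              intro Fw
              exact absurd ⟨hxi'w, hw2⟩ (hconss w hws Fw)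
            obtain ⟨-, hhopw, -⟩ := gap_id w hws hnfw i₁ Fi₁s hxi'w
              (fun f hf Ff hxf => by
                by_contra h
                push_neg at h
                exact absurd ⟨h, hxf.trans hw2⟩ (hconss f hf Ff))
            have hkey : cnt x s i₁ w = nbw x s i₁ j₁ := by
              unfold cnt nbw
              apply congrArg
              apply filter_congr
              intro k hk
              simp only [mem_range] at hk
              constructor
              · rintro ⟨a, c⟩
                exact ⟨a, lt_of_le_of_lt c hw2⟩
              · rintro ⟨a, c⟩
                refine ⟨a, ?_⟩
                rcases le_or_gt (x k) (x (s+1)) with h | h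
                · exact (lt_of_le_of_lt h hw1).le
                · exact hwmax k (by simp only [mem_filter, mem_range]; exact ⟨hk, h, c⟩)
            have hcnt1 : cnt x (s+1) i₁ w = cnt x s i₁ w + 1 :=
              cnt_succ_of x s i₁ w ⟨hub2.1, hw1.le⟩
            have hFw : fertileAt α x hop w (s+1) := by
              apply hnewfert w (by omega) hxi'w hhopw (by omega)
              intro m hm h1 h2
              have hnfm : ¬ fertileAt α x hop m s := by
                intro Fm
                exact absurd ⟨h1, h2.trans hw2⟩ (hconss m hm Fm)
              obtain ⟨-, hhopm, -⟩ := gap_id m hm hnfm i₁ Fi₁s h1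
                (fun f hf Ff hxf => by
                  by_contra h
                  push_neg at h
                  exact absurd ⟨h, (hxf.trans h2).trans hw2⟩ (hconss f hf Ff))
              omega
            exact absurd ⟨hxi'w, hw2⟩ (hcons w (by omega) hFw)
          · have hr0 : nbw x s (s+1) j₁ = 0 := by
              unfold nbw
              rw [not_nonempty_iff_eq_empty.mp hr, card_empty]
            have hFu : fertileAt α x hop (s+1) (s+1) := hufert (by omega)
            exact absurd hub2 (hcons (s+1) (le_refl _) hFu)
        · rw [btw_succ_of_not x s i₁ j₁ hub2]
          exact hbtw

lemma inv_all (α : ℝ) (hα : 0 < α) (x : ℕ → ℝ)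
    (hx0 : x 0 = 0) (hmem : ∀ i : ℕ, 0 < i → x i ∈ Set.Ioo (0 : ℝ) 1)
    (hinj : Function.Injective x)
    (parent : ℕ → ℕ) (hop : ℕ → ℕ)
    (hhop0 : hop 0 = 0)
    (hstruct : ∀ t : ℕ, 0 < t →
      parent t < t ∧ x (parent t) < x t ∧ hop t = hop (parent t) + 1)
    (hmin : ∀ t : ℕ, 0 < t → ∀ j < t, x j < x t →
      α * (njump x t (parent t) : ℝ) + (hop (parent t) : ℝ)
        ≤ α * (njump x t j : ℝ) + (hop j : ℝ))
    (htie : ∀ t : ℕ, 0 < t → ∀ j < t, x j < x t →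
      α * (njump x t j : ℝ) + (hop j : ℝ)
        = α * (njump x t (parent t) : ℝ) + (hop (parent t) : ℝ) →
      x j ≤ x (parent t)) :
    ∀ s : ℕ, BInv α x parent hop s := by
  intro s
  induction s with
  | zero =>
    constructor
    · intro v hv hnfv
      have hv0 : v = 0 := by omega
      subst hv0
      exact absurd (fert_zero hx0 hmem hhop0 0) hnfv
    · intro i j Fi Fj hxij hcons
      have hi0 : i = 0 := by have := Fi.1; omega
      have hj0 : j = 0 := by have := Fj.1; omega
      subst hi0; subst hj0
      exact absurd hxij (lt_irrefl _)
  | succ n ihn =>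
    exact inv_succ α hα x hx0 hmem hinj parent hop hhop0 hstruct hmin htie n ihn


/-- Structure of the gap between consecutive fertile vertices in the border
toll optimization process with A = ⌈1/α⌉: if i and j are fertile at time t
with x_i < x_j and no fertile vertex in between, then the (infertile) vertices
strictly between them number at most A-1 and are all children of i; moreover
if hop(j) > hop(i) then j is a child of i, there are exactly A-1 infertile
vertices between i and j, and hop(j) = hop(i) + 1. -/
theorem btop_consecutive_fertile (α : ℝ) (hα : 0 < α) (x : ℕ → ℝ)
    (hx0 : x 0 = 0) (hmem : ∀ i : ℕ, 0 < i → x i ∈ Set.Ioo (0 : ℝ) 1)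
    (hinj : Function.Injective x)
    (parent : ℕ → ℕ) (hop : ℕ → ℕ)
    (hhop0 : hop 0 = 0)
    (hstruct : ∀ t : ℕ, 0 < t →
      parent t < t ∧ x (parent t) < x t ∧ hop t = hop (parent t) + 1)
    (hmin : ∀ t : ℕ, 0 < t → ∀ j < t, x j < x t →
      α * (njump x t (parent t) : ℝ) + (hop (parent t) : ℝ)
        ≤ α * (njump x t j : ℝ) + (hop j : ℝ))
    (htie : ∀ t : ℕ, 0 < t → ∀ j < t, x j < x t →
      α * (njump x t j : ℝ) + (hop j : ℝ)
        = α * (njump x t (parent t) : ℝ) + (hop (parent t) : ℝ) →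
      x j ≤ x (parent t)) :
    ∀ t i j : ℕ, i ≤ t → j ≤ t →
      fertileAt α x hop i t → fertileAt α x hop j t → x i < x j →
      (∀ k ≤ t, fertileAt α x hop k t → ¬(x i < x k ∧ x k < x j)) →
      (((Finset.range (t + 1)).filter
          (fun v => ¬ fertileAt α x hop v t ∧ x i < x v ∧ x v < x j)).card
        ≤ ⌈1 / α⌉₊ - 1) ∧
      (∀ v ≤ t, ¬ fertileAt α x hop v t → x i < x v → x v < x j → parent v = i) ∧
      (hop i < hop j →
        parent j = i ∧
        ((Finset.range (t + 1)).filter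
            (fun v => ¬ fertileAt α x hop v t ∧ x i < x v ∧ x v < x j)).card
          = ⌈1 / α⌉₊ - 1 ∧
        hop j = hop i + 1) := by
  intro t i j hi hj Fi Fj hij hcons
  obtain ⟨inv1, inv2⟩ :=
    inv_all α hα x hx0 hmem hinj parent hop hhop0 hstruct hmin htie t
  have hcard : ((Finset.range (t + 1)).filter
      (fun v => ¬ fertileAt α x hop v t ∧ x i < x v ∧ x v < x j)).card
        = nbw x t i j := by
    unfold nbw
    apply congrArg
    apply filter_congr
    intro k hk
    simp only [mem_range] at hk
    constructor
    · rintro ⟨-, h⟩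
      exact h
    · intro h
      exact ⟨fun Fk => hcons k (by omega) Fk h, h⟩
  have hgoal2 : ∀ v ≤ t, ¬ fertileAt α x hop v t → x i < x v → x v < x j →
      parent v = i := by
    intro v hv hnf h1 h2
    obtain ⟨g, hg, Fg, hxgv, hparv, -, hint, -⟩ := inv1 v hv hnf
    have ha : x i ≤ x g := by
      by_contra h
      push_neg at h
      exact hint i hi h h1 Fi
    have hb : x g ≤ x i := by
      by_contra h
      push_neg at h
      exact absurd ⟨h, hxgv.trans h2⟩ (hcons g hg Fg)
    rw [hparv]
    exact hinj (le_antisymm hb ha)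
  have hgoal1 : nbw x t i j ≤ ⌈1/α⌉₊ - 1 := by
    by_cases hne : ((range (t+1)).filter (fun k => x i < x k ∧ x k < x j)).Nonempty
    · obtain ⟨v, hvmem, hvmax⟩ := Finset.exists_max_image _ x hne
      simp only [mem_filter, mem_range] at hvmem
      obtain ⟨hvr, h1, h2⟩ := hvmem
      have hvt : v ≤ t := by omega
      have hnfv : ¬ fertileAt α x hop v t := fun Fv => hcons v hvt Fv ⟨h1, h2⟩
      obtain ⟨g, hg, Fg, hxgv, -, -, hint, hcnt⟩ := inv1 v hvt hnfv
      have hgi : g = i := by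
        apply hinj
        apply le_antisymm
        · by_contra h
          push_neg at h
          exact absurd ⟨h, hxgv.trans h2⟩ (hcons g hg Fg)
        · by_contra h
          push_neg at h
          exact hint i hi h h1 Fi
      subst hgi
      have he : nbw x t g j = cnt x t g v := by
        unfold nbw cnt
        apply congrArg
        apply filter_congr
        intro k hk
        simp only [mem_range] at hk
        constructor
        · rintro ⟨a, c⟩
          exact ⟨a, hvmax k (by simp only [mem_filter, mem_range]; exact ⟨hk, a, c⟩)⟩
        · rintro ⟨a, c⟩
          exact ⟨a, lt_of_le_of_lt c h2⟩
      omega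
    · have he : nbw x t i j = 0 := by
        unfold nbw
        rw [not_nonempty_iff_eq_empty.mp hne, card_empty]
      omega
  refine ⟨by omega, hgoal2, ?_⟩
  intro hlt
  obtain ⟨hle, heq⟩ := inv2 i j Fi Fj hij hcons
  obtain ⟨hp, hb⟩ := heq hlt
  exact ⟨hp, by omega, by omega⟩
end
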